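/- arXiv:1605.02602 — 8 statements merged into one kernel-verified Lean document; each statement's English description precedes it below -/
import Mathlib

section
/- Let G be a Lie algebra over ℂ and let φ be a biderivation of G. Then [φ(x,y),[u,v]] = [[x,y],φ(u,v)] for all x, y, u, v ∈ G. -/
/-- A (skew-symmetric) biderivation of a Lie algebra `G` over `ℂ`: a bilinear map
`φ : G × G → G` with `φ(x,y) = -φ(y,x)`, `φ([x,y],z) = [x,φ(y,z)] + [φ(x,z),y]` and
`φ(x,[y,z]) = [φ(x,y),z] + [y,φ(x,z)]`. -/
def IsBiderivation {G : Type*} [LieRing G] [LieAlgebra ℂ G]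
    (φ : G →ₗ[ℂ] G →ₗ[ℂ] G) : Prop :=
  (∀ x y : G, φ x y = - φ y x) ∧
  (∀ x y z : G, φ ⁅x, y⁆ z = ⁅x, φ y z⁆ + ⁅φ x z, y⁆) ∧
  (∀ x y z : G, φ x ⁅y, z⁆ = ⁅φ x y, z⁆ + ⁅y, φ x z⁆)

/-- if `φ` is a biderivation of the Lie algebra `G` over `ℂ`, then
`[φ(x,y),[u,v]] = [[x,y],φ(u,v)]` for all `x, y, u, v ∈ G`. -/
theorem biderivation_bracket_eq {G : Type*} [LieRing G] [LieAlgebra ℂ G]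
    (φ : G →ₗ[ℂ] G →ₗ[ℂ] G) (hφ : IsBiderivation φ) (x y u v : G) :
    ⁅φ x y, ⁅u, v⁆⁆ = ⁅⁅x, y⁆, φ u v⁆ := by
  obtain ⟨hs, hL, hR⟩ := hφ
  have sk : ∀ a p q : G, ⁅a, ⁅p, q⁆⁆ = -⁅a, ⁅q, p⁆⁆ := by
    intro a p q
    rw [← lie_skew q p, lie_neg, neg_neg]
  have jac : ∀ a p q : G, ⁅a, ⁅p, q⁆⁆ = ⁅p, ⁅a, q⁆⁆ - ⁅q, ⁅a, p⁆⁆ := by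
    intro a p q
    rw [leibniz_lie a p q, ← lie_skew ⁅a, p⁆ q]
    abel
  have E1 : ∀ a b c d : G,
      ⁅a, ⁅φ b c, d⁆ + ⁅c, φ b d⁆⁆ + ⁅⁅φ a c, d⁆ + ⁅c, φ a d⁆, b⁆
        = ⁅⁅a, φ b c⁆ + ⁅φ a c, b⁆, d⁆ + ⁅c, ⁅a, φ b d⁆ + ⁅φ a d, b⁆⁆ := by
    intro a b c d
    have h1 : φ ⁅a, b⁆ ⁅c, d⁆ = ⁅a, φ b ⁅c, d⁆⁆ + ⁅φ a ⁅c, d⁆, b⁆ := hL a b ⁅c, d⁆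
    have h2 : φ ⁅a, b⁆ ⁅c, d⁆ = ⁅φ ⁅a, b⁆ c, d⁆ + ⁅c, φ ⁅a, b⁆ d⁆ := hR ⁅a, b⁆ c d
    rw [hR b c d, hR a c d] at h1
    rw [hL a b c, hL a b d] at h2
    exact h1.symm.trans h2
  have e1 := E1 x y u v
  have e2 := E1 x u y v
  have e3 := E1 x v y u
  rw [hs u y] at e2
  rw [hs v y, hs v u] at e3
  simp only [neg_lie, lie_neg, neg_neg, lie_add, add_lie, neg_add_rev] at e1 e2 e3
  have key :
      (⁅φ x y, ⁅u, v⁆⁆ + ⁅φ x y, ⁅u, v⁆⁆) +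
        ((⁅x, ⁅φ y u, v⁆⁆ + ⁅x, ⁅u, φ y v⁆⁆ + (⁅⁅φ x u, v⁆, y⁆ + ⁅⁅u, φ x v⁆, y⁆) +
          (-⁅x, ⁅φ y u, v⁆⁆ + ⁅x, ⁅y, φ u v⁆⁆ + (⁅⁅φ x y, v⁆, u⁆ + ⁅⁅y, φ x v⁆, u⁆))) +
          (-⁅⁅x, φ y v⁆, u⁆ + ⁅⁅φ x y, v⁆, u⁆ + (-⁅y, ⁅x, φ u v⁆⁆ + ⁅y, ⁅φ x u, v⁆⁆)))
      = (⁅⁅x, y⁆, φ u v⁆ + ⁅⁅x, y⁆, φ u v⁆) +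
        ((⁅⁅x, φ y u⁆, v⁆ + ⁅⁅φ x u, y⁆, v⁆ + (⁅u, ⁅x, φ y v⁆⁆ + ⁅u, ⁅φ x v, y⁆⁆) +
          (-⁅⁅x, φ y u⁆, v⁆ + ⁅⁅φ x y, u⁆, v⁆ + (⁅y, ⁅x, φ u v⁆⁆ + ⁅y, ⁅φ x v, u⁆⁆))) +
          (-⁅x, ⁅φ y v, u⁆⁆ + -⁅x, ⁅y, φ u v⁆⁆ + (⁅⁅φ x y, u⁆, v⁆ + ⁅⁅y, φ x u⁆, v⁆))) := by
    simp only [lie_lie]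
    rw [jac (φ x y) u v]
    rw [sk u (φ x y) v]
    rw [sk v (φ x y) u]
    rw [sk x (φ y u) v]
    rw [sk (φ x u) v y]
    rw [jac (φ x u) y v]
    rw [sk y (φ x u) v]
    rw [sk v (φ x u) y]
    rw [sk u (φ x v) y]
    rw [sk (φ x v) u y]
    rw [jac (φ x v) y u]
    rw [sk y (φ x v) u]
    rw [sk u (φ x v) y]
    rw [sk (φ x y) v u]
    rw [jac (φ x y) u v]
    rw [sk u (φ x y) v]
    rw [sk v (φ x y) u]
    rw [sk x (φ y v) u]
    rw [jac (φ y v) x u]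
    rw [sk x (φ y v) u]
    rw [sk u (φ y v) x]
    rw [jac (φ y u) x v]
    rw [sk x (φ y u) v]
    rw [sk v (φ y u) x]
    abel
  rw [e1, e2, e3] at key
  have h2 : (2 : ℂ) • ⁅φ x y, ⁅u, v⁆⁆ = (2 : ℂ) • ⁅⁅x, y⁆, φ u v⁆ := by
    rw [two_smul, two_smul]
    exact add_right_cancel key
  exact smul_right_injective G two_ne_zero h2
end

section
/- Let G be a Lie algebra over ℂ and let φ be a biderivation of G. Then [φ(x,y),[x,y]] = 0 for all x, y ∈ G. -/
/-- if `φ` is a biderivation of the Lie algebra `G` over `ℂ`, then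
`[φ(x,y),[x,y]] = 0` for all `x, y ∈ G`. -/
theorem biderivation_bracket_self {G : Type*} [LieRing G] [LieAlgebra ℂ G]
    (φ : G →ₗ[ℂ] G →ₗ[ℂ] G) (hφ : IsBiderivation φ) (x y : G) :
    ⁅φ x y, ⁅x, y⁆⁆ = 0 := by
  obtain ⟨hskew, hder1, hder2⟩ := hφ
  have hdiag : ∀ u : G, φ u u = 0 := by
    intro u
    have h := hskew u u
    have h2 : (2 : ℂ) • φ u u = 0 := by
      rw [two_smul]
      nth_rewrite 2 [h]
      abel
    have := (smul_eq_zero.mp h2).resolve_left (by norm_num)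
    exact this
  have hux : φ ⁅x, y⁆ x = - ⁅x, φ x y⁆ := by
    rw [hder1 x y x, hdiag x, hskew y x]
    simp
  have huy : φ ⁅x, y⁆ y = ⁅φ x y, y⁆ := by
    rw [hder1 x y y, hdiag y]
    simp
  have key := hder2 ⁅x, y⁆ x y
  rw [hdiag, hux, huy] at key
  have : (0 : G) = ⁅φ x y, ⁅x, y⁆⁆ := by
    rw [key]
    rw [leibniz_lie (φ x y) x y]
    simp [lie_skew]
  exact this.symm
end

section
/- Let G be a Lie algebra over ℂ and let φ be a biderivation of G. If x, y ∈ G satisfy [x,y] = 0, then φ(x,y) lies in the centralizer Z([G,G]) of the derived subalgebra, i.e. [φ(x,y),[u,v]] = 0 for all u, v ∈ G. -/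
/-- if `φ` is a biderivation of the Lie algebra `G` over `ℂ` and
`[x,y] = 0`, then `φ(x,y)` centralizes the derived subalgebra:
`[φ(x,y),[u,v]] = 0` for all `u, v ∈ G`. -/
theorem biderivation_mem_center_of_bracket_eq_zero {G : Type*} [LieRing G] [LieAlgebra ℂ G]
    (φ : G →ₗ[ℂ] G →ₗ[ℂ] G) (hφ : IsBiderivation φ) (x y : G) (hxy : ⁅x, y⁆ = 0) :
    ∀ u v : G, ⁅φ x y, ⁅u, v⁆⁆ = 0 := by
  obtain ⟨h1, h2, h3⟩ := hφ
  -- the bilinear "defect" B(a,b;c,d) = [φ(a,b),[c,d]] - [[a,b],φ(c,d)]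
  set B : G → G → G → G → G := fun a b c d => ⁅φ a b, ⁅c, d⁆⁆ - ⁅⁅a, b⁆, φ c d⁆ with hB
  -- key symmetry: B(a,b;c,d) = B(c,b;a,d)
  have key : ∀ a b c d : G, B a b c d = B c b a d := by
    intro a b c d
    have e := (h2 c a ⁅b, d⁆).symm.trans (h3 ⁅c, a⁆ b d)
    rw [h3 a b d, h3 c b d, h2 c a b, h2 c a d] at e
    simp only [lie_add, add_lie] at e
    rw [leibniz_lie c (φ a b) d, leibniz_lie c b (φ a d),
      ← lie_skew ⁅φ c b, d⁆ a, leibniz_lie a (φ c b) d,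
      ← lie_skew ⁅b, φ c d⁆ a, leibniz_lie a b (φ c d),
      ← lie_skew (φ c b) a, neg_lie,
      ← lie_skew (φ c d) a, lie_neg] at e
    simp only [hB]
    rw [← sub_eq_zero] at e ⊢
    rw [← sub_eq_zero] at e
    abel_nf at e ⊢
    linear_combination (norm := abel) e
  -- skew in the first pair
  have skew1 : ∀ a b c d : G, B b a c d = -B a b c d := by
    intro a b c d
    simp only [hB]
    rw [h1 b a, ← lie_skew b a]
    simp only [neg_lie]
    abel
  have chain : ∀ a b c d : G, B a b c d = -B a b c d := by
    intro a b c d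
    calc B a b c d = B c b a d := key a b c d
      _ = -B b c a d := by rw [skew1]
      _ = -B a c b d := by rw [key b c a d]
      _ = B c a b d := by rw [skew1, neg_neg]
      _ = B b a c d := by rw [key c a b d]
      _ = -B a b c d := skew1 a b c d
  have hBzero : ∀ a b c d : G, B a b c d = 0 := by
    intro a b c d
    have h := chain a b c d
    have h2' : (2 : ℂ) • B a b c d = 0 := by
      rw [two_smul]
      rw [eq_neg_iff_add_eq_zero] at h
      linear_combination (norm := abel) h
    have := smul_eq_zero.mp h2'
    simpa using this
  intro u v
  have := hBzero x y u v
  simp only [hB] at this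
  rw [hxy] at this
  simpa using this
end

section
/- Let L = L₀ ⊕ L₁ be a Lie superalgebra over ℂ and let φ be a super-biderivation of L of homogeneous degree |φ|. Then [φ(x,y),[u,v]] = (−1)^{|φ|(|x|+|y|)}[[x,y],φ(u,v)] for all homogeneous x, y, u, v ∈ L. -/
/-- A Lie superalgebra structure over `ℂ` on a vector space `L`: a `ℤ/2`-grading
`L = L₀ ⊕ L₁` together with a bilinear bracket satisfying `[L_α, L_β] ⊆ L_{α+β}`,
skew-supersymmetry `[x,y] = -(-1)^{|x||y|}[y,x]` and the super Jacobi identity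
`[x,[y,z]] = [[x,y],z] + (-1)^{|x||y|}[y,[x,z]]` for homogeneous elements. -/
structure LieSuperalgebraStruct (L : Type*) [AddCommGroup L] [Module ℂ L] where
  bracket : L →ₗ[ℂ] L →ₗ[ℂ] L
  grading : ZMod 2 → Submodule ℂ L
  isInternal : DirectSum.IsInternal grading
  bracket_mem : ∀ (α β : ZMod 2) (x y : L), x ∈ grading α → y ∈ grading β →
    bracket x y ∈ grading (α + β)
  skew : ∀ (α β : ZMod 2) (x y : L), x ∈ grading α → y ∈ grading β →
    bracket x y = (-(-1 : ℂ) ^ (α * β).val) • bracket y x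
  jacobi : ∀ (α β γ : ZMod 2) (x y z : L), x ∈ grading α → y ∈ grading β → z ∈ grading γ →
    bracket x (bracket y z) =
      bracket (bracket x y) z + ((-1 : ℂ) ^ (α * β).val) • bracket y (bracket x z)

/-- A super-biderivation of homogeneous degree `d` of a Lie superalgebra `L`: a bilinear
map `φ : L × L → L` with `φ(L_α, L_β) ⊆ L_{α+β+d}`, which is skew-supersymmetric,
`φ(x,y) = -(-1)^{|x||y|}φ(y,x)`, and satisfies
`φ([x,y],z) = (-1)^{d|x|}[x,φ(y,z)] + (-1)^{|y||z|}[φ(x,z),y]` and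
`φ(x,[y,z]) = [φ(x,y),z] + (-1)^{(d+|x|)|y|}[y,φ(x,z)]` for homogeneous `x, y, z`. -/
def IsSuperBiderivation {L : Type*} [AddCommGroup L] [Module ℂ L]
    (S : LieSuperalgebraStruct L) (d : ZMod 2) (φ : L →ₗ[ℂ] L →ₗ[ℂ] L) : Prop :=
  (∀ (α β : ZMod 2) (x y : L), x ∈ S.grading α → y ∈ S.grading β →
      φ x y ∈ S.grading (α + β + d)) ∧
  (∀ (α β : ZMod 2) (x y : L), x ∈ S.grading α → y ∈ S.grading β →
      φ x y = (-(-1 : ℂ) ^ (α * β).val) • φ y x) ∧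
  (∀ (α β γ : ZMod 2) (x y z : L), x ∈ S.grading α → y ∈ S.grading β → z ∈ S.grading γ →
      φ (S.bracket x y) z =
        ((-1 : ℂ) ^ (d * α).val) • S.bracket x (φ y z) +
          ((-1 : ℂ) ^ (β * γ).val) • S.bracket (φ x z) y) ∧
  (∀ (α β γ : ZMod 2) (x y z : L), x ∈ S.grading α → y ∈ S.grading β → z ∈ S.grading γ →
      φ x (S.bracket y z) =
        S.bracket (φ x y) z + ((-1 : ℂ) ^ ((d + α) * β).val) • S.bracket y (φ x z))

lemma zmod2_cases (a : ZMod 2) : a = 0 ∨ a = 1 := by revert a; decide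

set_option maxHeartbeats 4000000 in
/-- if `φ` is a super-biderivation of homogeneous degree `d` of the Lie
superalgebra `L`, then `[φ(x,y),[u,v]] = (-1)^{d(|x|+|y|)}[[x,y],φ(u,v)]` for all
homogeneous `x, y, u, v ∈ L`. -/
theorem superBiderivation_bracket_eq {L : Type*} [AddCommGroup L] [Module ℂ L]
    (S : LieSuperalgebraStruct L) (d : ZMod 2) (φ : L →ₗ[ℂ] L →ₗ[ℂ] L)
    (hφ : IsSuperBiderivation S d φ) (α β γ δ : ZMod 2) (x y u v : L)
    (hx : x ∈ S.grading α) (hy : y ∈ S.grading β)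
    (hu : u ∈ S.grading γ) (hv : v ∈ S.grading δ) :
    S.bracket (φ x y) (S.bracket u v) =
      ((-1 : ℂ) ^ (d * (α + β)).val) • S.bracket (S.bracket x y) (φ u v) := by

  obtain ⟨hmem, hsk, hA3, hA4⟩ := hφ
  have hbxy : S.bracket x y ∈ S.grading (α + β) := S.bracket_mem _ _ _ _ hx hy
  have hbxu : S.bracket x u ∈ S.grading (α + γ) := S.bracket_mem _ _ _ _ hx hu
  have hbxv : S.bracket x v ∈ S.grading (α + δ) := S.bracket_mem _ _ _ _ hx hv
  have hbyu : S.bracket y u ∈ S.grading (β + γ) := S.bracket_mem _ _ _ _ hy hu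
  have hbyv : S.bracket y v ∈ S.grading (β + δ) := S.bracket_mem _ _ _ _ hy hv
  have hbuv : S.bracket u v ∈ S.grading (γ + δ) := S.bracket_mem _ _ _ _ hu hv
  have E1A := hA3 α γ (β + δ) x u (S.bracket y v) hx hu hbyv
  rw [hA4 γ β δ u y v hu hy hv, hA4 α β δ x y v hx hy hv] at E1A
  have E1B := hA4 (α + γ) β δ (S.bracket x u) y v hbxu hy hv
  rw [hA3 α γ β x u y hx hu hy, hA3 α γ δ x u v hx hu hv] at E1B
  have E1 := E1A.symm.trans E1B
  simp only [map_add, map_smul, LinearMap.add_apply, LinearMap.smul_apply, smul_add, smul_smul] at E1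
  rw [hsk γ β u y hu hy] at E1
  simp only [map_smul, LinearMap.smul_apply, smul_smul] at E1
  have E2A := hA3 α β (γ + δ) x y (S.bracket u v) hx hy hbuv
  rw [hA4 β γ δ y u v hy hu hv, hA4 α γ δ x u v hx hu hv] at E2A
  have E2B := hA4 (α + β) γ δ (S.bracket x y) u v hbxy hu hv
  rw [hA3 α β γ x y u hx hy hu, hA3 α β δ x y v hx hy hv] at E2B
  have E2 := E2A.symm.trans E2B
  simp only [map_add, map_smul, LinearMap.add_apply, LinearMap.smul_apply, smul_add, smul_smul] at E2
  have E3A := hA3 α δ (β + γ) x v (S.bracket y u) hx hv hbyu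
  rw [hA4 δ β γ v y u hv hy hu, hA4 α β γ x y u hx hy hu] at E3A
  have E3B := hA4 (α + δ) β γ (S.bracket x v) y u hbxv hy hu
  rw [hA3 α δ β x v y hx hv hy, hA3 α δ γ x v u hx hv hu] at E3B
  have E3 := E3A.symm.trans E3B
  simp only [map_add, map_smul, LinearMap.add_apply, LinearMap.smul_apply, smul_add, smul_smul] at E3
  rw [hsk δ β v y hv hy, hsk δ γ v u hv hu] at E3
  simp only [map_smul, LinearMap.smul_apply, smul_smul] at E3
  have hpxy : φ x y ∈ S.grading (α + β + d) := hmem _ _ _ _ hx hy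
  have R0 := S.jacobi (α + β + d) γ δ (φ x y) u v hpxy hu hv
  have hbpxyv : S.bracket (φ x y) v ∈ S.grading ((α + β + d) + δ) := S.bracket_mem _ _ _ _ hpxy hv
  have R10 := S.skew γ ((α + β + d) + δ) u (S.bracket (φ x y) v) hu hbpxyv
  have hpxu : φ x u ∈ S.grading (α + γ + d) := hmem _ _ _ _ hx hu
  have R27 : S.bracket (S.bracket (φ x u) y) v = (-(-1:ℂ) ^ (((α + γ + d) * β).val)) • S.bracket (S.bracket y (φ x u)) v := by
    rw [S.skew (α + γ + d) β (φ x u) y hpxu hy]; simp only [map_smul, LinearMap.smul_apply]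
  have hbpxuv : S.bracket (φ x u) v ∈ S.grading ((α + γ + d) + δ) := S.bracket_mem _ _ _ _ hpxu hv
  have R34 := S.skew β ((α + γ + d) + δ) y (S.bracket (φ x u) v) hy hbpxuv
  have hpxv : φ x v ∈ S.grading (α + δ + d) := hmem _ _ _ _ hx hv
  have R48 := S.jacobi (α + δ + d) β γ (φ x v) y u hpxv hy hu
  have R49 : S.bracket (φ x v) (S.bracket y u) = (-(-1:ℂ) ^ ((β * γ).val)) • S.bracket (φ x v) (S.bracket u y) := by
    rw [S.skew β γ y u hy hu]; simp only [map_smul, LinearMap.smul_apply]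
  have R51 : S.bracket (S.bracket (φ x v) y) u = (-(-1:ℂ) ^ (((α + δ + d) * β).val)) • S.bracket (S.bracket y (φ x v)) u := by
    rw [S.skew (α + δ + d) β (φ x v) y hpxv hy]; simp only [map_smul, LinearMap.smul_apply]
  have R52 := S.jacobi (α + δ + d) γ β (φ x v) u y hpxv hu hy
  have R55 : S.bracket (S.bracket (φ x v) u) y = (-(-1:ℂ) ^ (((α + δ + d) * γ).val)) • S.bracket (S.bracket u (φ x v)) y := by
    rw [S.skew (α + δ + d) γ (φ x v) u hpxv hu]; simp only [map_smul, LinearMap.smul_apply]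
  have hpyv : φ y v ∈ S.grading (β + δ + d) := hmem _ _ _ _ hy hv
  have R96 := S.jacobi (β + δ + d) α γ (φ y v) x u hpyv hx hu
  have R98 := S.skew (β + δ + d) (α + γ) (φ y v) (S.bracket x u) hpyv hbxu
  have R99 : S.bracket (S.bracket (φ y v) x) u = (-(-1:ℂ) ^ (((β + δ + d) * α).val)) • S.bracket (S.bracket x (φ y v)) u := by
    rw [S.skew (β + δ + d) α (φ y v) x hpyv hx]; simp only [map_smul, LinearMap.smul_apply]
  have R108 := S.jacobi α γ (β + δ + d) x u (φ y v) hx hu hpyv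
  have hpuv : φ u v ∈ S.grading (γ + δ + d) := hmem _ _ _ _ hu hv
  have R132 := S.jacobi α β (γ + δ + d) x y (φ u v) hx hy hpuv
  rcases zmod2_cases d with rfl|rfl <;> rcases zmod2_cases α with rfl|rfl <;> rcases zmod2_cases β with rfl|rfl <;> rcases zmod2_cases γ with rfl|rfl <;> rcases zmod2_cases δ with rfl|rfl <;>
    simp only [show (1:ZMod 2)+1 = 0 by decide, add_zero, zero_add, mul_zero, zero_mul, mul_one, one_mul, show ((0:ZMod 2)).val = 0 from rfl, show ((1:ZMod 2)).val = 1 from rfl, pow_zero, pow_one] at R0 R10 R27 R34 R48 R49 R51 R52 R55 R96 R98 R99 R108 R132 E1 E2 E3 ⊢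
  · linear_combination (norm := module) R0 + R10 + (-1/2 : ℂ) • R27 + (1/2 : ℂ) • R34 + (1/2 : ℂ) • R48 + (-1/2 : ℂ) • R49 + (1/2 : ℂ) • R51 + (1/2 : ℂ) • R52 + (1/2 : ℂ) • R55 + (-1/2 : ℂ) • R96 + (1/2 : ℂ) • R98 + (-1/2 : ℂ) • R99 + (1/2 : ℂ) • R108 + R132 + (-1/2 : ℂ) • E1 + (-1/2 : ℂ) • E2 + (1/2 : ℂ) • E3
  · linear_combination (norm := module) R0 + R10 + (-1/2 : ℂ) • R27 + (1/2 : ℂ) • R34 + (1/2 : ℂ) • R48 + (-1/2 : ℂ) • R49 + (1/2 : ℂ) • R51 + (1/2 : ℂ) • R52 + (1/2 : ℂ) • R55 + (-1/2 : ℂ) • R96 + (1/2 : ℂ) • R98 + (-1/2 : ℂ) • R99 + (1/2 : ℂ) • R108 + R132 + (-1/2 : ℂ) • E1 + (-1/2 : ℂ) • E2 + (1/2 : ℂ) • E3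
  · linear_combination (norm := module) R0 + R10 + (-1/2 : ℂ) • R27 + (1/2 : ℂ) • R34 + (1/2 : ℂ) • R48 + (-1/2 : ℂ) • R49 + (1/2 : ℂ) • R51 + (1/2 : ℂ) • R52 + (1/2 : ℂ) • R55 + (-1/2 : ℂ) • R96 + (1/2 : ℂ) • R98 + (-1/2 : ℂ) • R99 + (1/2 : ℂ) • R108 + R132 + (-1/2 : ℂ) • E1 + (-1/2 : ℂ) • E2 + (1/2 : ℂ) • E3
  · linear_combination (norm := module) R0 + R10 + (-1/2 : ℂ) • R27 + (1/2 : ℂ) • R34 + (-1/2 : ℂ) • R48 + (1/2 : ℂ) • R49 + (-1/2 : ℂ) • R51 + (-1/2 : ℂ) • R52 + (-1/2 : ℂ) • R55 + (1/2 : ℂ) • R96 + (-1/2 : ℂ) • R98 + (1/2 : ℂ) • R99 + (1/2 : ℂ) • R108 + R132 + (-1/2 : ℂ) • E1 + (-1/2 : ℂ) • E2 + (-1/2 : ℂ) • E3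
  · linear_combination (norm := module) R0 + R10 + (-1/2 : ℂ) • R27 + (1/2 : ℂ) • R34 + (1/2 : ℂ) • R48 + (-1/2 : ℂ) • R49 + (1/2 : ℂ) • R51 + (1/2 : ℂ) • R52 + (1/2 : ℂ) • R55 + (-1/2 : ℂ) • R96 + (1/2 : ℂ) • R98 + (-1/2 : ℂ) • R99 + (1/2 : ℂ) • R108 + R132 + (-1/2 : ℂ) • E1 + (-1/2 : ℂ) • E2 + (1/2 : ℂ) • E3
  · linear_combination (norm := module) R0 + R10 + (-1/2 : ℂ) • R27 + (1/2 : ℂ) • R34 + (-1/2 : ℂ) • R48 + (1/2 : ℂ) • R49 + (-1/2 : ℂ) • R51 + (-1/2 : ℂ) • R52 + (-1/2 : ℂ) • R55 + (-1/2 : ℂ) • R96 + (1/2 : ℂ) • R98 + (-1/2 : ℂ) • R99 + (1/2 : ℂ) • R108 + R132 + (-1/2 : ℂ) • E1 + (-1/2 : ℂ) • E2 + (-1/2 : ℂ) • E3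
  · linear_combination (norm := module) R0 + (-1:ℂ) • R10 + (1/2 : ℂ) • R27 + (1/2 : ℂ) • R34 + (1/2 : ℂ) • R48 + (-1/2 : ℂ) • R49 + (1/2 : ℂ) • R51 + (-1/2 : ℂ) • R52 + (-1/2 : ℂ) • R55 + (-1/2 : ℂ) • R96 + (1/2 : ℂ) • R98 + (-1/2 : ℂ) • R99 + (-1/2 : ℂ) • R108 + R132 + (1/2 : ℂ) • E1 + (-1/2 : ℂ) • E2 + (1/2 : ℂ) • E3
  · linear_combination (norm := module) R0 + (-1:ℂ) • R10 + (1/2 : ℂ) • R27 + (1/2 : ℂ) • R34 + (1/2 : ℂ) • R48 + (-1/2 : ℂ) • R49 + (1/2 : ℂ) • R51 + (-1/2 : ℂ) • R52 + (-1/2 : ℂ) • R55 + (1/2 : ℂ) • R96 + (-1/2 : ℂ) • R98 + (1/2 : ℂ) • R99 + (-1/2 : ℂ) • R108 + R132 + (1/2 : ℂ) • E1 + (-1/2 : ℂ) • E2 + (1/2 : ℂ) • E3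
  · linear_combination (norm := module) R0 + R10 + (-1/2 : ℂ) • R27 + (1/2 : ℂ) • R34 + (1/2 : ℂ) • R48 + (-1/2 : ℂ) • R49 + (1/2 : ℂ) • R51 + (1/2 : ℂ) • R52 + (1/2 : ℂ) • R55 + (-1/2 : ℂ) • R96 + (1/2 : ℂ) • R98 + (-1/2 : ℂ) • R99 + (1/2 : ℂ) • R108 + R132 + (-1/2 : ℂ) • E1 + (-1/2 : ℂ) • E2 + (1/2 : ℂ) • E3
  · linear_combination (norm := module) R0 + R10 + (-1/2 : ℂ) • R27 + (1/2 : ℂ) • R34 + (1/2 : ℂ) • R48 + (-1/2 : ℂ) • R49 + (1/2 : ℂ) • R51 + (1/2 : ℂ) • R52 + (1/2 : ℂ) • R55 + (1/2 : ℂ) • R96 + (-1/2 : ℂ) • R98 + (1/2 : ℂ) • R99 + (1/2 : ℂ) • R108 + R132 + (-1/2 : ℂ) • E1 + (-1/2 : ℂ) • E2 + (1/2 : ℂ) • E3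
  · linear_combination (norm := module) R0 + (-1:ℂ) • R10 + (-1/2 : ℂ) • R27 + (1/2 : ℂ) • R34 + (1/2 : ℂ) • R48 + (-1/2 : ℂ) • R49 + (1/2 : ℂ) • R51 + (1/2 : ℂ) • R52 + (1/2 : ℂ) • R55 + (-1/2 : ℂ) • R96 + (1/2 : ℂ) • R98 + (-1/2 : ℂ) • R99 + (1/2 : ℂ) • R108 + R132 + (-1/2 : ℂ) • E1 + (-1/2 : ℂ) • E2 + (1/2 : ℂ) • E3
  · linear_combination (norm := module) R0 + (-1:ℂ) • R10 + (-1/2 : ℂ) • R27 + (1/2 : ℂ) • R34 + (-1/2 : ℂ) • R48 + (1/2 : ℂ) • R49 + (-1/2 : ℂ) • R51 + (-1/2 : ℂ) • R52 + (-1/2 : ℂ) • R55 + (-1/2 : ℂ) • R96 + (1/2 : ℂ) • R98 + (-1/2 : ℂ) • R99 + (1/2 : ℂ) • R108 + R132 + (-1/2 : ℂ) • E1 + (-1/2 : ℂ) • E2 + (-1/2 : ℂ) • E3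
  · linear_combination (norm := module) R0 + R10 + (-1/2 : ℂ) • R27 + (-1/2 : ℂ) • R34 + (1/2 : ℂ) • R48 + (-1/2 : ℂ) • R49 + (1/2 : ℂ) • R51 + (1/2 : ℂ) • R52 + (1/2 : ℂ) • R55 + (1/2 : ℂ) • R96 + (-1/2 : ℂ) • R98 + (1/2 : ℂ) • R99 + (1/2 : ℂ) • R108 + R132 + (-1/2 : ℂ) • E1 + (-1/2 : ℂ) • E2 + (1/2 : ℂ) • E3
  · linear_combination (norm := module) R0 + R10 + (-1/2 : ℂ) • R27 + (-1/2 : ℂ) • R34 + (-1/2 : ℂ) • R48 + (1/2 : ℂ) • R49 + (-1/2 : ℂ) • R51 + (-1/2 : ℂ) • R52 + (-1/2 : ℂ) • R55 + (-1/2 : ℂ) • R96 + (1/2 : ℂ) • R98 + (-1/2 : ℂ) • R99 + (1/2 : ℂ) • R108 + R132 + (-1/2 : ℂ) • E1 + (-1/2 : ℂ) • E2 + (-1/2 : ℂ) • E3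
  · linear_combination (norm := module) R0 + R10 + (1/2 : ℂ) • R27 + (-1/2 : ℂ) • R34 + (1/2 : ℂ) • R48 + (-1/2 : ℂ) • R49 + (1/2 : ℂ) • R51 + (-1/2 : ℂ) • R52 + (-1/2 : ℂ) • R55 + (1/2 : ℂ) • R96 + (-1/2 : ℂ) • R98 + (1/2 : ℂ) • R99 + (-1/2 : ℂ) • R108 + R132 + (1/2 : ℂ) • E1 + (-1/2 : ℂ) • E2 + (1/2 : ℂ) • E3
  · linear_combination (norm := module) R0 + R10 + (1/2 : ℂ) • R27 + (-1/2 : ℂ) • R34 + (1/2 : ℂ) • R48 + (-1/2 : ℂ) • R49 + (1/2 : ℂ) • R51 + (-1/2 : ℂ) • R52 + (-1/2 : ℂ) • R55 + (1/2 : ℂ) • R96 + (-1/2 : ℂ) • R98 + (1/2 : ℂ) • R99 + (-1/2 : ℂ) • R108 + R132 + (1/2 : ℂ) • E1 + (-1/2 : ℂ) • E2 + (1/2 : ℂ) • E3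
  · linear_combination (norm := module) R0 + R10 + (-1/2 : ℂ) • R27 + (1/2 : ℂ) • R34 + (1/2 : ℂ) • R48 + (-1/2 : ℂ) • R49 + (1/2 : ℂ) • R51 + (1/2 : ℂ) • R52 + (1/2 : ℂ) • R55 + (-1/2 : ℂ) • R96 + (1/2 : ℂ) • R98 + (-1/2 : ℂ) • R99 + (1/2 : ℂ) • R108 + R132 + (-1/2 : ℂ) • E1 + (-1/2 : ℂ) • E2 + (1/2 : ℂ) • E3
  · linear_combination (norm := module) R0 + R10 + (-1/2 : ℂ) • R27 + (1/2 : ℂ) • R34 + (1/2 : ℂ) • R48 + (-1/2 : ℂ) • R49 + (1/2 : ℂ) • R51 + (1/2 : ℂ) • R52 + (1/2 : ℂ) • R55 + (-1/2 : ℂ) • R96 + (1/2 : ℂ) • R98 + (-1/2 : ℂ) • R99 + (1/2 : ℂ) • R108 + R132 + (-1/2 : ℂ) • E1 + (-1/2 : ℂ) • E2 + (1/2 : ℂ) • E3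
  · linear_combination (norm := module) R0 + (-1:ℂ) • R10 + (-1/2 : ℂ) • R27 + (1/2 : ℂ) • R34 + (1/2 : ℂ) • R48 + (-1/2 : ℂ) • R49 + (1/2 : ℂ) • R51 + (1/2 : ℂ) • R52 + (1/2 : ℂ) • R55 + (-1/2 : ℂ) • R96 + (1/2 : ℂ) • R98 + (-1/2 : ℂ) • R99 + (-1/2 : ℂ) • R108 + R132 + (-1/2 : ℂ) • E1 + (-1/2 : ℂ) • E2 + (1/2 : ℂ) • E3
  · linear_combination (norm := module) R0 + (-1:ℂ) • R10 + (-1/2 : ℂ) • R27 + (1/2 : ℂ) • R34 + (-1/2 : ℂ) • R48 + (1/2 : ℂ) • R49 + (-1/2 : ℂ) • R51 + (-1/2 : ℂ) • R52 + (-1/2 : ℂ) • R55 + (1/2 : ℂ) • R96 + (-1/2 : ℂ) • R98 + (1/2 : ℂ) • R99 + (-1/2 : ℂ) • R108 + R132 + (-1/2 : ℂ) • E1 + (-1/2 : ℂ) • E2 + (-1/2 : ℂ) • E3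
  · linear_combination (norm := module) R0 + R10 + (-1/2 : ℂ) • R27 + (-1/2 : ℂ) • R34 + (1/2 : ℂ) • R48 + (-1/2 : ℂ) • R49 + (1/2 : ℂ) • R51 + (1/2 : ℂ) • R52 + (1/2 : ℂ) • R55 + (-1/2 : ℂ) • R96 + (1/2 : ℂ) • R98 + (-1/2 : ℂ) • R99 + (1/2 : ℂ) • R108 + (-1:ℂ) • R132 + (-1/2 : ℂ) • E1 + (-1/2 : ℂ) • E2 + (1/2 : ℂ) • E3
  · linear_combination (norm := module) R0 + R10 + (-1/2 : ℂ) • R27 + (-1/2 : ℂ) • R34 + (-1/2 : ℂ) • R48 + (1/2 : ℂ) • R49 + (-1/2 : ℂ) • R51 + (-1/2 : ℂ) • R52 + (-1/2 : ℂ) • R55 + (-1/2 : ℂ) • R96 + (1/2 : ℂ) • R98 + (-1/2 : ℂ) • R99 + (1/2 : ℂ) • R108 + (-1:ℂ) • R132 + (-1/2 : ℂ) • E1 + (-1/2 : ℂ) • E2 + (-1/2 : ℂ) • E3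
  · linear_combination (norm := module) R0 + R10 + (1/2 : ℂ) • R27 + (-1/2 : ℂ) • R34 + (1/2 : ℂ) • R48 + (-1/2 : ℂ) • R49 + (1/2 : ℂ) • R51 + (-1/2 : ℂ) • R52 + (-1/2 : ℂ) • R55 + (-1/2 : ℂ) • R96 + (1/2 : ℂ) • R98 + (-1/2 : ℂ) • R99 + (1/2 : ℂ) • R108 + (-1:ℂ) • R132 + (1/2 : ℂ) • E1 + (-1/2 : ℂ) • E2 + (1/2 : ℂ) • E3
  · linear_combination (norm := module) R0 + R10 + (1/2 : ℂ) • R27 + (-1/2 : ℂ) • R34 + (1/2 : ℂ) • R48 + (-1/2 : ℂ) • R49 + (1/2 : ℂ) • R51 + (-1/2 : ℂ) • R52 + (-1/2 : ℂ) • R55 + (1/2 : ℂ) • R96 + (-1/2 : ℂ) • R98 + (1/2 : ℂ) • R99 + (1/2 : ℂ) • R108 + (-1:ℂ) • R132 + (1/2 : ℂ) • E1 + (-1/2 : ℂ) • E2 + (1/2 : ℂ) • E3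
  · linear_combination (norm := module) R0 + R10 + (-1/2 : ℂ) • R27 + (1/2 : ℂ) • R34 + (1/2 : ℂ) • R48 + (-1/2 : ℂ) • R49 + (1/2 : ℂ) • R51 + (1/2 : ℂ) • R52 + (1/2 : ℂ) • R55 + (-1/2 : ℂ) • R96 + (1/2 : ℂ) • R98 + (-1/2 : ℂ) • R99 + (-1/2 : ℂ) • R108 + (-1:ℂ) • R132 + (-1/2 : ℂ) • E1 + (-1/2 : ℂ) • E2 + (1/2 : ℂ) • E3
  · linear_combination (norm := module) R0 + R10 + (-1/2 : ℂ) • R27 + (1/2 : ℂ) • R34 + (1/2 : ℂ) • R48 + (-1/2 : ℂ) • R49 + (1/2 : ℂ) • R51 + (1/2 : ℂ) • R52 + (1/2 : ℂ) • R55 + (1/2 : ℂ) • R96 + (-1/2 : ℂ) • R98 + (1/2 : ℂ) • R99 + (-1/2 : ℂ) • R108 + (-1:ℂ) • R132 + (-1/2 : ℂ) • E1 + (-1/2 : ℂ) • E2 + (1/2 : ℂ) • E3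
  · linear_combination (norm := module) R0 + R10 + (-1/2 : ℂ) • R27 + (1/2 : ℂ) • R34 + (1/2 : ℂ) • R48 + (-1/2 : ℂ) • R49 + (1/2 : ℂ) • R51 + (1/2 : ℂ) • R52 + (1/2 : ℂ) • R55 + (-1/2 : ℂ) • R96 + (1/2 : ℂ) • R98 + (-1/2 : ℂ) • R99 + (1/2 : ℂ) • R108 + (-1:ℂ) • R132 + (-1/2 : ℂ) • E1 + (-1/2 : ℂ) • E2 + (1/2 : ℂ) • E3
  · linear_combination (norm := module) R0 + R10 + (-1/2 : ℂ) • R27 + (1/2 : ℂ) • R34 + (-1/2 : ℂ) • R48 + (1/2 : ℂ) • R49 + (-1/2 : ℂ) • R51 + (-1/2 : ℂ) • R52 + (-1/2 : ℂ) • R55 + (-1/2 : ℂ) • R96 + (1/2 : ℂ) • R98 + (-1/2 : ℂ) • R99 + (1/2 : ℂ) • R108 + (-1:ℂ) • R132 + (-1/2 : ℂ) • E1 + (-1/2 : ℂ) • E2 + (-1/2 : ℂ) • E3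
  · linear_combination (norm := module) R0 + R10 + (-1/2 : ℂ) • R27 + (1/2 : ℂ) • R34 + (1/2 : ℂ) • R48 + (-1/2 : ℂ) • R49 + (1/2 : ℂ) • R51 + (1/2 : ℂ) • R52 + (1/2 : ℂ) • R55 + (1/2 : ℂ) • R96 + (-1/2 : ℂ) • R98 + (1/2 : ℂ) • R99 + (-1/2 : ℂ) • R108 + R132 + (-1/2 : ℂ) • E1 + (-1/2 : ℂ) • E2 + (1/2 : ℂ) • E3
  · linear_combination (norm := module) R0 + R10 + (-1/2 : ℂ) • R27 + (1/2 : ℂ) • R34 + (-1/2 : ℂ) • R48 + (1/2 : ℂ) • R49 + (-1/2 : ℂ) • R51 + (-1/2 : ℂ) • R52 + (-1/2 : ℂ) • R55 + (-1/2 : ℂ) • R96 + (1/2 : ℂ) • R98 + (-1/2 : ℂ) • R99 + (-1/2 : ℂ) • R108 + R132 + (-1/2 : ℂ) • E1 + (-1/2 : ℂ) • E2 + (-1/2 : ℂ) • E3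
  · linear_combination (norm := module) R0 + (-1:ℂ) • R10 + (1/2 : ℂ) • R27 + (1/2 : ℂ) • R34 + (1/2 : ℂ) • R48 + (-1/2 : ℂ) • R49 + (1/2 : ℂ) • R51 + (-1/2 : ℂ) • R52 + (-1/2 : ℂ) • R55 + (1/2 : ℂ) • R96 + (-1/2 : ℂ) • R98 + (1/2 : ℂ) • R99 + (-1/2 : ℂ) • R108 + R132 + (1/2 : ℂ) • E1 + (-1/2 : ℂ) • E2 + (1/2 : ℂ) • E3
  · linear_combination (norm := module) R0 + (-1:ℂ) • R10 + (1/2 : ℂ) • R27 + (1/2 : ℂ) • R34 + (1/2 : ℂ) • R48 + (-1/2 : ℂ) • R49 + (1/2 : ℂ) • R51 + (-1/2 : ℂ) • R52 + (-1/2 : ℂ) • R55 + (1/2 : ℂ) • R96 + (-1/2 : ℂ) • R98 + (1/2 : ℂ) • R99 + (-1/2 : ℂ) • R108 + R132 + (1/2 : ℂ) • E1 + (-1/2 : ℂ) • E2 + (1/2 : ℂ) • E3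
end

section
/- Let L = L₀ ⊕ L₁ be a Lie superalgebra over ℂ and let φ be a super-biderivation of L of homogeneous degree |φ|. If x, y ∈ L are homogeneous with |x| + |y| = 0̄, then [φ(x,y),[x,y]] = 0. -/
theorem zmod2cases (α : ZMod 2) : α = 0 ∨ α = 1 := by
  fin_cases α
  · exact Or.inl rfl
  · exact Or.inr rfl

/-- if `φ` is a super-biderivation of homogeneous degree `d` of the Lie
superalgebra `L` and `x, y` are homogeneous with `|x| + |y| = 0̄`, then
`[φ(x,y),[x,y]] = 0`. -/
theorem superBiderivation_bracket_self {L : Type*} [AddCommGroup L] [Module ℂ L]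
    (S : LieSuperalgebraStruct L) (d : ZMod 2) (φ : L →ₗ[ℂ] L →ₗ[ℂ] L)
    (hφ : IsSuperBiderivation S d φ) (α β : ZMod 2) (x y : L)
    (hx : x ∈ S.grading α) (hy : y ∈ S.grading β) (hαβ : α + β = 0) :
    S.bracket (φ x y) (S.bracket x y) = 0 := by
  obtain ⟨hmem, hskew, h3, h4⟩ := hφ
  have hβα : β = α := by
    rcases zmod2cases α with rfl | rfl <;> rcases zmod2cases β with rfl | rfl <;>
      first | rfl | exact absurd hαβ (by decide)
  have hβα' := hβα.symm
  subst hβα'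
  have haa : α + α = 0 := hαβ
  have hu : S.bracket x y ∈ S.grading 0 := by
    have h := S.bracket_mem α α x y hx hy; rwa [haa] at h
  have hw : φ x y ∈ S.grading d := by
    have h := hmem α α x y hx hy; rwa [haa, zero_add] at h
  have huu : φ (S.bracket x y) (S.bracket x y) = 0 := by
    have h := hskew 0 0 (S.bracket x y) (S.bracket x y) hu hu
    rw [show ((0 : ZMod 2) * 0).val = 0 from rfl, pow_zero] at h
    linear_combination (norm := module) ((2 : ℂ))⁻¹ • h
  have J := S.jacobi d α α (φ x y) x y hw hx hy
  have K := S.skew d α (φ x y) x hw hx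
  have Esk := hskew α α y x hy hx
  rcases zmod2cases α with rfl | rfl
  · -- even case
    have EA := h4 0 0 0 (S.bracket x y) x y hu hx hy
    rw [huu, h3 0 0 0 x y x hx hy hx, h3 0 0 0 x y y hx hy hy, Esk] at EA
    simp only [show ((d + 0) * 0).val = 0 from by rw [mul_zero]; rfl,
      show ((d : ZMod 2) * 0).val = 0 from by rw [mul_zero]; rfl,
      show ((0 : ZMod 2) * 0).val = 0 from rfl, pow_zero, one_smul, neg_smul,
      map_add, map_smul, map_neg, LinearMap.add_apply, LinearMap.smul_apply,
      LinearMap.neg_apply] at EA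
    have EB := h3 0 0 0 x y (S.bracket x y) hx hy hu
    rw [huu, h4 0 0 0 y x y hy hx hy, h4 0 0 0 x x y hx hx hy, Esk] at EB
    simp only [show ((d + 0) * 0).val = 0 from by rw [mul_zero]; rfl,
      show ((d : ZMod 2) * 0).val = 0 from by rw [mul_zero]; rfl,
      show ((0 : ZMod 2) * 0).val = 0 from rfl, pow_zero, one_smul, neg_smul,
      map_add, map_smul, map_neg, LinearMap.add_apply, LinearMap.smul_apply,
      LinearMap.neg_apply] at EB
    rw [K] at J
    simp only [show ((d : ZMod 2) * 0).val = 0 from by rw [mul_zero]; rfl,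
      pow_zero, one_smul, neg_smul, map_add, map_smul, map_neg, LinearMap.add_apply,
      LinearMap.smul_apply, LinearMap.neg_apply] at J
    linear_combination (norm := module) J - ((2:ℂ))⁻¹ • EA + ((2:ℂ))⁻¹ • EB
  · -- odd case
    have hyy : S.bracket y y ∈ S.grading 0 := by
      have h := S.bracket_mem 1 1 y y hy hy
      rwa [show ((1 : ZMod 2) + 1) = 0 from rfl] at h
    have hxx : S.bracket x x ∈ S.grading 0 := by
      have h := S.bracket_mem 1 1 x x hx hx
      rwa [show ((1 : ZMod 2) + 1) = 0 from rfl] at h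
    have hwy : S.bracket (φ x y) y ∈ S.grading (d + 1) := S.bracket_mem d 1 (φ x y) y hw hy
    have hxw : S.bracket x (φ x y) ∈ S.grading (1 + d) := S.bracket_mem 1 d x (φ x y) hx hw
    rcases zmod2cases d with rfl | rfl <;>
    · have F2 := h4 1 1 1 x y y hx hy hy
      have Sk1 := S.skew 1 _ y (φ x y) hy hw
      have FA := h3 1 1 0 x x (S.bracket y y) hx hx hyy
      rw [F2, Sk1] at FA
      have Sk2 := S.skew _ 1 (S.bracket (φ x y) y) x hwy hx
      have F4 := h3 1 1 1 x x y hx hx hy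
      rw [K] at F4
      have FB := h4 0 1 1 (S.bracket x x) y y hxx hy hy
      rw [F4] at FB
      have Sk3 := S.skew 1 _ y (S.bracket x (φ x y)) hy hxw
      rw [K] at J
      simp only [show ((0:ZMod 2)*1).val = 0 from rfl,
        show ((1:ZMod 2)*0).val = 0 from rfl,
        show ((1:ZMod 2)*1).val = 1 from rfl,
        show ((0:ZMod 2)*0).val = 0 from rfl,
        show (((0:ZMod 2))*(1+0)).val = 0 from rfl,
        show (((1:ZMod 2))*(1+0)).val = 1 from rfl,
        show (((1:ZMod 2))*(1+1)).val = 0 from rfl,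
        show (((0:ZMod 2)+1)*1).val = 1 from rfl,
        show (((1:ZMod 2)+1)*1).val = 0 from rfl,
        show (((0:ZMod 2)+0)*1).val = 0 from rfl,
        show (((1:ZMod 2)+0)*1).val = 1 from rfl,
        pow_zero, pow_one, one_smul, neg_smul, neg_neg,
        map_add, map_smul, map_neg, LinearMap.add_apply, LinearMap.smul_apply,
        LinearMap.neg_apply, smul_neg] at FA FB J Sk2 Sk3
      rw [Sk2] at FA
      rw [Sk3] at FB
      linear_combination (norm := module) J - ((4:ℂ))⁻¹ • FA + ((4:ℂ))⁻¹ • FB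
end

section
/- Every super-biderivation φ of homogeneous degree on the centerless super-Virasoro algebra S(0) is an inner super-biderivation, i.e. there exists λ ∈ ℂ such that φ(x,y) = λ[x,y] for all x, y ∈ S(0). -/
/-- The underlying vector space of the centerless super-Virasoro algebra `S(0)`:
the first factor records the coefficients of the even basis `{L_m | m ∈ ℤ}` and the
second factor the coefficients of the odd basis `{G_k | k ∈ ℤ}`. -/
abbrev SVir0 : Type := (ℤ →₀ ℂ) × (ℤ →₀ ℂ)

/-- The even basis vector `L_m` of `S(0)`. -/
noncomputable def Lgen (m : ℤ) : SVir0 := (Finsupp.single m 1, 0)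

/-- The odd basis vector `G_k` of `S(0)`. -/
noncomputable def Ggen (k : ℤ) : SVir0 := (0, Finsupp.single k 1)

/-- The super bracket of `S(0)`, determined by `[L_m, L_n] = (n-m)L_{m+n}`,
`[L_m, G_k] = (k - m/2)G_{m+k}`, `[G_k, L_m] = -(k - m/2)G_{m+k}` and
`[G_k, G_l] = 2L_{k+l}`, extended bilinearly. -/
noncomputable def sbk (x y : SVir0) : SVir0 :=
  ( x.1.sum (fun m a => y.1.sum fun n b =>
      Finsupp.single (m + n) (a * b * ((n : ℂ) - (m : ℂ))))
    + x.2.sum (fun k a => y.2.sum fun l b =>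
      Finsupp.single (k + l) (2 * (a * b))),
    x.1.sum (fun m a => y.2.sum fun k b =>
      Finsupp.single (m + k) (a * b * ((k : ℂ) - (m : ℂ) / 2)))
    + x.2.sum (fun k a => y.1.sum fun m b =>
      Finsupp.single (m + k) (-(a * b * ((k : ℂ) - (m : ℂ) / 2)))) )

/-- The homogeneous components of `S(0)`: degree `0̄` is the even part (the span of
the `L_m`), degree `1̄` is the odd part (the span of the `G_k`). -/
def grad : ZMod 2 → Set SVir0 := fun i =>
  if i = 0 then {x | x.2 = 0} else {x | x.1 = 0}

/-- A super-biderivation of homogeneous degree `d` of `S(0)`: a bilinear map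
`φ : S(0) × S(0) → S(0)` with `φ(L_α, L_β) ⊆ L_{α+β+d}`, which is skew-supersymmetric,
`φ(x,y) = -(-1)^{|x||y|}φ(y,x)`, and satisfies
`φ([x,y],z) = (-1)^{d|x|}[x,φ(y,z)] + (-1)^{|y||z|}[φ(x,z),y]` and
`φ(x,[y,z]) = [φ(x,y),z] + (-1)^{(d+|x|)|y|}[y,φ(x,z)]` for homogeneous `x, y, z`. -/
def IsSuperBiderivationSV (d : ZMod 2) (φ : SVir0 →ₗ[ℂ] SVir0 →ₗ[ℂ] SVir0) : Prop :=
  (∀ (α β : ZMod 2) (x y : SVir0), x ∈ grad α → y ∈ grad β →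
      φ x y ∈ grad (α + β + d)) ∧
  (∀ (α β : ZMod 2) (x y : SVir0), x ∈ grad α → y ∈ grad β →
      φ x y = (-(-1 : ℂ) ^ (α * β).val) • φ y x) ∧
  (∀ (α β γ : ZMod 2) (x y z : SVir0), x ∈ grad α → y ∈ grad β → z ∈ grad γ →
      φ (sbk x y) z =
        ((-1 : ℂ) ^ (d * α).val) • sbk x (φ y z) +
          ((-1 : ℂ) ^ (β * γ).val) • sbk (φ x z) y) ∧
  (∀ (α β γ : ZMod 2) (x y z : SVir0), x ∈ grad α → y ∈ grad β → z ∈ grad γ →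
      φ x (sbk y z) =
        sbk (φ x y) z + ((-1 : ℂ) ^ ((d + α) * β).val) • sbk y (φ x z))

namespace SV
noncomputable def S (σ : ℤ→ℤ→ℤ) (h : ℤ→ℤ→ℂ) (f g : ℤ→₀ℂ) : ℤ→₀ℂ :=
  f.sum fun m a => g.sum fun n b => Finsupp.single (σ m n) (a*b*h m n)

lemma S_zero_left (σ h g) : S σ h 0 g = 0 := Finsupp.sum_zero_index

lemma S_zero_right (σ h f) : S σ h f 0 = 0 := by
  simp [S, Finsupp.sum_zero_index]

lemma S_add_left (σ h f f' g) : S σ h (f+f') g = S σ h f g + S σ h f' g := by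
  unfold S
  apply Finsupp.sum_add_index' <;> intros <;> simp [add_mul, Finsupp.single_add, Finsupp.sum_add]

lemma S_add_right (σ h f g g') : S σ h f (g+g') = S σ h f g + S σ h f g' := by
  unfold S
  rw [← Finsupp.sum_add]
  apply Finsupp.sum_congr
  intro m _
  apply Finsupp.sum_add_index' <;> intros <;> simp [mul_add, add_mul, Finsupp.single_add]

lemma S_smul_left (σ : ℤ→ℤ→ℤ) (h : ℤ→ℤ→ℂ) (c : ℂ) (f g : ℤ→₀ℂ) : S σ h (c • f) g = c • S σ h f g := by
  unfold S
  rw [Finsupp.sum_smul_index, Finsupp.smul_sum]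
  · apply Finsupp.sum_congr
    intro m _
    rw [Finsupp.smul_sum]
    apply Finsupp.sum_congr
    intro n _
    rw [Finsupp.smul_single]
    congr 1; simp [smul_eq_mul]; ring
  · intro m; simp

lemma S_smul_right (σ : ℤ→ℤ→ℤ) (h : ℤ→ℤ→ℂ) (c : ℂ) (f g : ℤ→₀ℂ) : S σ h f (c • g) = c • S σ h f g := by
  unfold S
  rw [Finsupp.smul_sum]
  apply Finsupp.sum_congr
  intro m _
  rw [Finsupp.sum_smul_index, Finsupp.smul_sum]
  · apply Finsupp.sum_congr
    intro n _
    rw [Finsupp.smul_single]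
    congr 1; simp [smul_eq_mul]; ring
  · intro n; simp

lemma S_single_single (σ h m n a b) :
    S σ h (Finsupp.single m a) (Finsupp.single n b) = Finsupp.single (σ m n) (a*b*h m n) := by
  unfold S
  rw [Finsupp.sum_single_index, Finsupp.sum_single_index] <;> simp [Finsupp.sum_zero_index]

lemma S_single_right (σ h f n b) :
    S σ h f (Finsupp.single n b) = f.sum fun m a => Finsupp.single (σ m n) (a*b*h m n) := by
  unfold S
  apply Finsupp.sum_congr
  intro m _
  rw [Finsupp.sum_single_index]; simp

lemma S_single_left (σ h m a g) :
    S σ h (Finsupp.single m a) g = g.sum fun n b => Finsupp.single (σ m n) (a*b*h m n) := by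
  unfold S
  rw [Finsupp.sum_single_index]
  simp [Finsupp.sum_zero_index]

end SV

namespace SV
noncomputable def h1 : ℤ→ℤ→ℂ := fun m n => (n:ℂ) - m
noncomputable def h2 : ℤ→ℤ→ℂ := fun _ _ => 2
noncomputable def h3 : ℤ→ℤ→ℂ := fun m k => (k:ℂ) - (m:ℂ)/2
noncomputable def h4 : ℤ→ℤ→ℂ := fun k m => -((k:ℂ) - (m:ℂ)/2)
def σa : ℤ→ℤ→ℤ := fun m n => m + n
def σb : ℤ→ℤ→ℤ := fun k m => m + k

lemma sbk_eq (x y : SVir0) :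
    sbk x y = (S σa h1 x.1 y.1 + S σa h2 x.2 y.2,
               S σa h3 x.1 y.2 + S σb h4 x.2 y.1) := by
  unfold sbk S h1 h2 h3 h4 σa σb
  refine Prod.ext ?_ ?_ <;> dsimp only <;> congr 1 <;>
    (apply Finsupp.sum_congr; intro m _; apply Finsupp.sum_congr; intro n _; congr 1; ring)

lemma sbk_add_left (x x' y : SVir0) : sbk (x+x') y = sbk x y + sbk x' y := by
  simp only [sbk_eq, Prod.fst_add, Prod.snd_add, S_add_left, Prod.mk_add_mk]
  congr 1 <;> abel

lemma sbk_add_right (x y y' : SVir0) : sbk x (y+y') = sbk x y + sbk x y' := by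
  simp only [sbk_eq, Prod.fst_add, Prod.snd_add, S_add_right, Prod.mk_add_mk]
  congr 1 <;> abel

lemma sbk_smul_left (c : ℂ) (x y : SVir0) : sbk (c • x) y = c • sbk x y := by
  simp only [sbk_eq, Prod.smul_fst, Prod.smul_snd, S_smul_left, Prod.smul_mk, smul_add]

lemma sbk_smul_right (c : ℂ) (x y : SVir0) : sbk x (c • y) = c • sbk x y := by
  simp only [sbk_eq, Prod.smul_fst, Prod.smul_snd, S_smul_right, Prod.smul_mk, smul_add]

lemma smul_Lgen (a : ℂ) (t : ℤ) : a • Lgen t = (Finsupp.single t a, 0) := by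
  unfold Lgen; rw [Prod.smul_mk, smul_zero, Finsupp.smul_single, smul_eq_mul, mul_one]

lemma smul_Ggen (a : ℂ) (t : ℤ) : a • Ggen t = (0, Finsupp.single t a) := by
  unfold Ggen; rw [Prod.smul_mk, smul_zero, Finsupp.smul_single, smul_eq_mul, mul_one]

lemma sbk_LL (m n : ℤ) : sbk (Lgen m) (Lgen n) = ((n:ℂ) - m) • Lgen (m+n) := by
  rw [smul_Lgen, sbk_eq]
  show (S σa h1 (Finsupp.single m 1) (Finsupp.single n 1) + S σa h2 0 0,
        S σa h3 (Finsupp.single m 1) 0 + S σb h4 0 (Finsupp.single n 1)) = _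
  rw [S_single_single]; simp only [S_zero_left, S_zero_right, add_zero, zero_add]
  refine Prod.ext ?_ rfl
  show Finsupp.single (σa m n) (1*1*h1 m n) = Finsupp.single (m+n) ((n:ℂ)-m)
  unfold σa h1; congr 1; ring

lemma sbk_LG (m k : ℤ) : sbk (Lgen m) (Ggen k) = ((k:ℂ) - m/2) • Ggen (m+k) := by
  rw [smul_Ggen, sbk_eq]
  show (S σa h1 (Finsupp.single m 1) 0 + S σa h2 0 (Finsupp.single k 1),
        S σa h3 (Finsupp.single m 1) (Finsupp.single k 1) + S σb h4 0 0) = _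
  rw [S_single_single]; simp only [S_zero_left, S_zero_right, add_zero, zero_add]
  refine Prod.ext rfl ?_
  show Finsupp.single (σa m k) (1*1*h3 m k) = Finsupp.single (m+k) ((k:ℂ)-(m:ℂ)/2)
  unfold σa h3; congr 1; ring

lemma sbk_GL (k m : ℤ) : sbk (Ggen k) (Lgen m) = (-((k:ℂ) - m/2)) • Ggen (m+k) := by
  rw [smul_Ggen, sbk_eq]
  show (S σa h1 0 (Finsupp.single m 1) + S σa h2 (Finsupp.single k 1) 0,
        S σa h3 0 0 + S σb h4 (Finsupp.single k 1) (Finsupp.single m 1)) = _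
  rw [S_single_single]; simp only [S_zero_left, S_zero_right, add_zero, zero_add]
  refine Prod.ext rfl ?_
  show Finsupp.single (σb k m) (1*1*h4 k m) = Finsupp.single (m+k) (-((k:ℂ)-(m:ℂ)/2))
  unfold σb h4; congr 1; ring

lemma sbk_GG (k l : ℤ) : sbk (Ggen k) (Ggen l) = (2:ℂ) • Lgen (k+l) := by
  rw [smul_Lgen, sbk_eq]
  show (S σa h1 0 0 + S σa h2 (Finsupp.single k 1) (Finsupp.single l 1),
        S σa h3 0 (Finsupp.single l 1) + S σb h4 (Finsupp.single k 1) 0) = _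
  rw [S_single_single]; simp only [S_zero_left, S_zero_right, add_zero, zero_add]
  refine Prod.ext ?_ rfl
  show Finsupp.single (σa k l) (1*1*h2 k l) = Finsupp.single (k+l) (2:ℂ)
  unfold σa h2; congr 1; ring

end SV

namespace SV

noncomputable def W (f : ℤ→₀ℂ) : ℤ→₀ℂ := f.sum fun n b => Finsupp.single n ((n:ℂ)*b)

lemma sbk_L0 (v : SVir0) : sbk (Lgen 0) v = (W v.1, W v.2) := by
  rw [sbk_eq]
  show (S σa h1 (Finsupp.single 0 1) v.1 + S σa h2 0 v.2,
        S σa h3 (Finsupp.single 0 1) v.2 + S σb h4 0 v.1) = _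
  rw [S_single_left, S_single_left]
  simp only [S_zero_left, add_zero]
  refine Prod.ext ?_ ?_ <;> dsimp only <;> unfold W
  · apply Finsupp.sum_congr; intro n _
    unfold σa h1; rw [zero_add]; congr 1; push_cast; ring
  · apply Finsupp.sum_congr; intro n _
    unfold σa h3; rw [zero_add]; congr 1; push_cast; ring

lemma sbk_v_L0 (v : SVir0) : sbk v (Lgen 0) = - sbk (Lgen 0) v := by
  rw [sbk_L0, sbk_eq]
  show (S σa h1 v.1 (Finsupp.single 0 1) + S σa h2 v.2 0,
        S σa h3 v.1 0 + S σb h4 v.2 (Finsupp.single 0 1)) = _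
  rw [S_single_right, S_single_right]
  simp only [S_zero_right, add_zero, zero_add]
  have hneg : -((W v.1, W v.2) : SVir0) = (-W v.1, -W v.2) := rfl
  rw [hneg]
  refine Prod.ext ?_ ?_ <;> dsimp only <;> unfold W <;>
    rw [Finsupp.sum, Finsupp.sum, ← Finset.sum_neg_distrib] <;>
    (apply Finset.sum_congr rfl; intro n _; rw [← Finsupp.single_neg])
  · unfold σa h1; rw [add_zero]; congr 1; push_cast; ring
  · unfold σb h4; rw [zero_add]; congr 1; push_cast; ring

lemma W_apply (f : ℤ→₀ℂ) (j : ℤ) : W f j = (j:ℂ) * f j := by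
  unfold W
  rw [Finsupp.sum_apply]
  by_cases hj : j ∈ f.support
  · rw [Finsupp.sum_eq_single j (fun i _ hij => by rw [Finsupp.single_apply, if_neg hij]) (by simp),
      Finsupp.single_apply, if_pos rfl]
  · have h0 : f j = 0 := Finsupp.notMem_support_iff.mp hj
    rw [Finsupp.sum, Finset.sum_eq_zero, h0, mul_zero]
    intro i hi
    rw [Finsupp.single_apply, if_neg]
    intro h; subst h; exact hj hi

lemma weight_even (v : SVir0) (n : ℤ) (hw : sbk (Lgen 0) v = (n:ℂ) • v) (hp : v.2 = 0) :
    v = (v.1 n) • Lgen n := by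
  rw [smul_Lgen]
  refine Prod.ext ?_ hp
  ext j
  rcases eq_or_ne j n with rfl | hj
  · rw [Finsupp.single_apply, if_pos rfl]
  · have h1 := congrArg (fun w : SVir0 => w.1 j) hw
    rw [sbk_L0] at h1
    dsimp only at h1
    rw [W_apply, Prod.smul_fst, Finsupp.smul_apply, smul_eq_mul] at h1
    have hz : ((j:ℂ) - n) * v.1 j = 0 := by rw [sub_mul, h1]; ring
    have hjn : ((j:ℂ) - n) ≠ 0 := by
      rw [sub_ne_zero]; exact_mod_cast hj
    rw [Finsupp.single_apply, if_neg (Ne.symm hj)]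
    exact (mul_eq_zero.mp hz).resolve_left hjn

lemma weight_odd (v : SVir0) (n : ℤ) (hw : sbk (Lgen 0) v = (n:ℂ) • v) (hp : v.1 = 0) :
    v = (v.2 n) • Ggen n := by
  rw [smul_Ggen]
  refine Prod.ext hp ?_
  ext j
  rcases eq_or_ne j n with rfl | hj
  · rw [Finsupp.single_apply, if_pos rfl]
  · have h1 := congrArg (fun w : SVir0 => w.2 j) hw
    rw [sbk_L0] at h1
    dsimp only at h1
    rw [W_apply, Prod.smul_snd, Finsupp.smul_apply, smul_eq_mul] at h1
    have hz : ((j:ℂ) - n) * v.2 j = 0 := by rw [sub_mul, h1]; ring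
    have hjn : ((j:ℂ) - n) ≠ 0 := by
      rw [sub_ne_zero]; exact_mod_cast hj
    rw [Finsupp.single_apply, if_neg (Ne.symm hj)]
    exact (mul_eq_zero.mp hz).resolve_left hjn

lemma Lgen_cancel {a b : ℂ} {t : ℤ} (h : a • Lgen t = b • Lgen t) : a = b := by
  rw [smul_Lgen, smul_Lgen] at h
  have := congrArg (fun v : SVir0 => v.1 t) h
  dsimp only at this
  rwa [Finsupp.single_eq_same, Finsupp.single_eq_same] at this

lemma Ggen_cancel {a b : ℂ} {t : ℤ} (h : a • Ggen t = b • Ggen t) : a = b := by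
  rw [smul_Ggen, smul_Ggen] at h
  have := congrArg (fun v : SVir0 => v.2 t) h
  dsimp only at this
  rwa [Finsupp.single_eq_same, Finsupp.single_eq_same] at this

lemma Lgen_smul_zero {a : ℂ} {t : ℤ} (h : a • Lgen t = 0) : a = 0 :=
  Lgen_cancel (by rw [h, zero_smul])

lemma Ggen_smul_zero {a : ℂ} {t : ℤ} (h : a • Ggen t = 0) : a = 0 :=
  Ggen_cancel (by rw [h, zero_smul])

lemma Lgen_mem (m : ℤ) : Lgen m ∈ grad 0 := by
  unfold grad Lgen; rw [if_pos rfl]; exact rfl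

lemma Ggen_mem (k : ℤ) : Ggen k ∈ grad 1 := by
  unfold grad Ggen; rw [if_neg one_ne_zero]; exact rfl

lemma hom_ext {M : Type*} [AddCommMonoid M] [Module ℂ M] {f g : SVir0 →ₗ[ℂ] M}
    (hL : ∀ m, f (Lgen m) = g (Lgen m)) (hG : ∀ k, f (Ggen k) = g (Ggen k)) : f = g := by
  have key1 : ∀ u : ℤ→₀ℂ, f (u, 0) = g (u, 0) := by
    intro u
    induction u using Finsupp.induction_linear with
    | zero => show f 0 = g 0; rw [map_zero, map_zero]
    | add p q hp hq =>
        have : ((p + q : ℤ→₀ℂ), (0:ℤ→₀ℂ)) = ((p, 0) : SVir0) + (q, 0) := by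
          rw [Prod.mk_add_mk, add_zero]
        rw [this, map_add, map_add, hp, hq]
    | single a b => rw [← smul_Lgen, map_smul, map_smul, hL]
  have key2 : ∀ u : ℤ→₀ℂ, f (0, u) = g (0, u) := by
    intro u
    induction u using Finsupp.induction_linear with
    | zero => show f 0 = g 0; rw [map_zero, map_zero]
    | add p q hp hq =>
        have : ((0:ℤ→₀ℂ), (p + q : ℤ→₀ℂ)) = ((0, p) : SVir0) + (0, q) := by
          rw [Prod.mk_add_mk, add_zero]
        rw [this, map_add, map_add, hp, hq]
    | single a b => rw [← smul_Ggen, map_smul, map_smul, hG]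
  ext x <;>
    simp only [LinearMap.comp_apply, Finsupp.lsingle_apply, LinearMap.inl_apply,
      LinearMap.inr_apply]
  · exact key1 _
  · exact key2 _

end SV

namespace SV
lemma mem_grad0 (x : SVir0) : x ∈ grad 0 ↔ x.2 = 0 := by
  unfold grad; rw [if_pos rfl]; exact Iff.rfl
lemma mem_grad1 (x : SVir0) : x ∈ grad 1 ↔ x.1 = 0 := by
  unfold grad; rw [if_neg one_ne_zero]; exact Iff.rfl
end SV

namespace SV

lemma sbk_zero_right (v : SVir0) : sbk v 0 = 0 := by
  rw [sbk_eq]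
  show (S σa h1 v.1 0 + S σa h2 v.2 0, S σa h3 v.1 0 + S σb h4 v.2 0) = 0
  rw [S_zero_right, S_zero_right, S_zero_right, S_zero_right, add_zero]
  rfl

lemma sbk_zero_left (v : SVir0) : sbk 0 v = 0 := by
  rw [sbk_eq]
  show (S σa h1 0 v.1 + S σa h2 0 v.2, S σa h3 0 v.2 + S σb h4 0 v.1) = 0
  rw [S_zero_left, S_zero_left, S_zero_left, S_zero_left, add_zero]
  rfl

lemma self_neg_zero {v : SVir0} (h : v = -v) : v = 0 := by
  have h2 : (2:ℂ) • v = 0 := by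
    rw [two_smul ℂ v]
    nth_rewrite 2 [h]
    exact add_neg_cancel v
  rcases (smul_eq_zero (R := ℂ) (M := SVir0)).mp h2 with h' | h'
  · exact absurd h' two_ne_zero
  · exact h'

lemma master (d : ZMod 2) (φ : SVir0 →ₗ[ℂ] SVir0 →ₗ[ℂ] SVir0)
    (hid3 : ∀ (α β γ : ZMod 2) (x y z : SVir0), x ∈ grad α → y ∈ grad β → z ∈ grad γ →
      φ (sbk x y) z =
        ((-1 : ℂ) ^ (d * α).val) • sbk x (φ y z) +
          ((-1 : ℂ) ^ (β * γ).val) • sbk (φ x z) y)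
    (hid4 : ∀ (α β γ : ZMod 2) (x y z : SVir0), x ∈ grad α → y ∈ grad β → z ∈ grad γ →
      φ x (sbk y z) =
        sbk (φ x y) z + ((-1 : ℂ) ^ ((d + α) * β).val) • sbk y (φ x z))
    (α γ : ZMod 2) (x z : SVir0) (hx : x ∈ grad α) (hz : z ∈ grad γ)
    (wx wz : ℤ)
    (hx0 : sbk x (Lgen 0) = (-(wx:ℂ)) • x)
    (hz0 : sbk (Lgen 0) z = (wz:ℂ) • z) :
    ((wz:ℂ) - wx) • φ x z
      = sbk (φ x (Lgen 0)) z + ((-1:ℂ)^((d*α).val)) • sbk x (φ (Lgen 0) z) := by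
  have P1 := hid4 α 0 γ x (Lgen 0) z hx (Lgen_mem 0) hz
  rw [hz0, map_smul] at P1
  have e0 : ((d+α)*0 : ZMod 2) = 0 := mul_zero _
  rw [e0] at P1
  simp only [ZMod.val_zero, pow_zero, one_smul] at P1
  have P2 := hid3 α 0 γ x (Lgen 0) z hx (Lgen_mem 0) hz
  have e1 : ((0:ZMod 2)*γ) = 0 := zero_mul _
  rw [e1] at P2
  simp only [ZMod.val_zero, pow_zero, one_smul] at P2
  rw [hx0, map_smul, LinearMap.smul_apply, sbk_v_L0] at P2
  have hsub : sbk (Lgen 0) (φ x z) = (wz:ℂ) • (φ x z) - sbk (φ x (Lgen 0)) z := by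
    rw [eq_sub_iff_add_eq, add_comm]; exact P1.symm
  rw [hsub] at P2
  calc ((wz:ℂ) - wx) • φ x z = (-(wx:ℂ)) • (φ x z) + (wz:ℂ) • (φ x z) := by module
    _ = (((-1:ℂ)^((d*α).val)) • sbk x (φ (Lgen 0) z)
          + -((wz:ℂ) • (φ x z) - sbk (φ x (Lgen 0)) z)) + (wz:ℂ) • (φ x z) := by rw [P2]
    _ = sbk (φ x (Lgen 0)) z + ((-1:ℂ)^((d*α).val)) • sbk x (φ (Lgen 0) z) := by abel

noncomputable def Sbk : SVir0 →ₗ[ℂ] SVir0 →ₗ[ℂ] SVir0 :=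
  LinearMap.mk₂ ℂ sbk sbk_add_left sbk_smul_left sbk_add_right sbk_smul_right

lemma final_wrap (φ : SVir0 →ₗ[ℂ] SVir0 →ₗ[ℂ] SVir0) (lam : ℂ)
    (hLL : ∀ m n, φ (Lgen m) (Lgen n) = lam • sbk (Lgen m) (Lgen n))
    (hLG : ∀ m k, φ (Lgen m) (Ggen k) = lam • sbk (Lgen m) (Ggen k))
    (hGL : ∀ k m, φ (Ggen k) (Lgen m) = lam • sbk (Ggen k) (Lgen m))
    (hGG : ∀ k l, φ (Ggen k) (Ggen l) = lam • sbk (Ggen k) (Ggen l)) :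
    ∀ x y, φ x y = lam • sbk x y := by
  have hphi : φ = lam • Sbk := by
    apply hom_ext (M := SVir0 →ₗ[ℂ] SVir0)
    · intro m
      apply hom_ext
      · intro n
        show φ (Lgen m) (Lgen n) = (lam • Sbk (Lgen m)) (Lgen n)
        rw [LinearMap.smul_apply]; exact hLL m n
      · intro k
        show φ (Lgen m) (Ggen k) = (lam • Sbk (Lgen m)) (Ggen k)
        rw [LinearMap.smul_apply]; exact hLG m k
    · intro k
      apply hom_ext
      · intro m
        show φ (Ggen k) (Lgen m) = (lam • Sbk (Ggen k)) (Lgen m)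
        rw [LinearMap.smul_apply]; exact hGL k m
      · intro l
        show φ (Ggen k) (Ggen l) = (lam • Sbk (Ggen k)) (Ggen l)
        rw [LinearMap.smul_apply]; exact hGG k l
  intro x y
  rw [hphi]
  rfl

end SV


namespace SV
lemma skew_reduce {v w : SVir0} {e : ZMod 2} (he : e.val = 0)
    (h : v = (-(-1:ℂ)^e.val) • w) : v = -w := by
  rw [he, pow_zero] at h
  rw [h]
  exact neg_one_smul ℂ w
end SV


/-- every super-biderivation of homogeneous degree on the centerless
super-Virasoro algebra `S(0)` is inner: there is `λ ∈ ℂ` with `φ(x,y) = λ[x,y]`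
for all `x, y ∈ S(0)`. -/
theorem superBiderivation_SVir0_is_inner (d : ZMod 2)
    (φ : SVir0 →ₗ[ℂ] SVir0 →ₗ[ℂ] SVir0) (hφ : IsSuperBiderivationSV d φ) :
    ∃ lam : ℂ, ∀ x y : SVir0, φ x y = lam • sbk x y := by
  obtain ⟨hgrad, hskew, hid3, hid4⟩ := hφ
  have hLLdiag : ∀ m : ℤ, φ (Lgen m) (Lgen m) = 0 := fun m =>
    SV.self_neg_zero (SV.skew_reduce (by decide)
      (hskew 0 0 (Lgen m) (Lgen m) (SV.Lgen_mem m) (SV.Lgen_mem m)))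
  have hLL0 : φ (Lgen 0) (Lgen 0) = 0 := hLLdiag 0
  have hwt : ∀ (α : ZMod 2) (x : SVir0) (wx : ℤ), x ∈ grad α →
      sbk x (Lgen 0) = (-(wx:ℂ)) • x →
      sbk (Lgen 0) (φ x (Lgen 0)) = (wx:ℂ) • (φ x (Lgen 0)) := by
    intro α x wx hx hx0
    have P2 := hid3 α 0 0 x (Lgen 0) (Lgen 0) hx (SV.Lgen_mem 0) (SV.Lgen_mem 0)
    rw [hx0, map_smul, LinearMap.smul_apply, hLL0, SV.sbk_zero_right, smul_zero,
      SV.sbk_v_L0, show ((0:ZMod 2)*0) = 0 by decide] at P2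
    simp only [ZMod.val_zero, pow_zero, one_smul, zero_add] at P2
    have P3 : -((-(wx:ℂ)) • (φ x (Lgen 0))) = sbk (Lgen 0) (φ x (Lgen 0)) := by
      rw [P2, neg_neg]
    rw [← P3]
    module
  have hLw : ∀ n : ℤ, sbk (Lgen n) (Lgen 0) = (-(n:ℂ)) • Lgen n := by
    intro n; rw [SV.sbk_LL]; norm_num
  have hGw : ∀ k : ℤ, sbk (Ggen k) (Lgen 0) = (-(k:ℂ)) • Ggen k := by
    intro k; rw [SV.sbk_GL]; norm_num
  have hL0L : ∀ n : ℤ, sbk (Lgen 0) (Lgen n) = (n:ℂ) • Lgen n := by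
    intro n; rw [SV.sbk_LL]; norm_num
  have hL0G : ∀ l : ℤ, sbk (Lgen 0) (Ggen l) = (l:ℂ) • Ggen l := by
    intro l; rw [SV.sbk_LG]; norm_num
  have hd : d = 0 ∨ d = 1 := by fin_cases d <;> [left; right] <;> rfl
  rcases hd with rfl | rfl
  · -- ============================ d = 0 =================================
    have hvmem : ∀ n:ℤ, (φ (Lgen n) (Lgen 0)).2 = 0 := by
      intro n
      have h := hgrad 0 0 (Lgen n) (Lgen 0) (SV.Lgen_mem n) (SV.Lgen_mem 0)
      rw [show (0+0+0 : ZMod 2) = 0 by decide] at h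
      exact (SV.mem_grad0 _).mp h
    have humem : ∀ k:ℤ, (φ (Ggen k) (Lgen 0)).1 = 0 := by
      intro k
      have h := hgrad 1 0 (Ggen k) (Lgen 0) (SV.Ggen_mem k) (SV.Lgen_mem 0)
      rw [show (1+0+0 : ZMod 2) = 1 by decide] at h
      exact (SV.mem_grad1 _).mp h
    have hv0 : ∀ n:ℤ, ∃ a : ℂ, φ (Lgen n) (Lgen 0) = a • Lgen n := fun n =>
      ⟨_, SV.weight_even _ n (hwt 0 (Lgen n) n (SV.Lgen_mem n) (hLw n)) (hvmem n)⟩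
    choose c hv using hv0
    have hu0 : ∀ k:ℤ, ∃ a : ℂ, φ (Ggen k) (Lgen 0) = a • Ggen k := fun k =>
      ⟨_, SV.weight_odd _ k (hwt 1 (Ggen k) k (SV.Ggen_mem k) (hGw k)) (humem k)⟩
    choose b hu using hu0
    have hsk0L : ∀ n:ℤ, φ (Lgen 0) (Lgen n) = (-(c n)) • Lgen n := by
      intro n
      have h := SV.skew_reduce (by decide)
        (hskew 0 0 (Lgen 0) (Lgen n) (SV.Lgen_mem 0) (SV.Lgen_mem n))
      rw [h, hv n]
      module
    have hsk0G : ∀ k:ℤ, φ (Lgen 0) (Ggen k) = (-(b k)) • Ggen k := by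
      intro k
      have h := SV.skew_reduce (by decide)
        (hskew 0 1 (Lgen 0) (Ggen k) (SV.Lgen_mem 0) (SV.Ggen_mem k))
      rw [h, hu k]
      module
    have hc0 : c 0 = 0 := SV.Lgen_smul_zero ((hv 0).symm.trans hLL0)
    have hM : ∀ k l : ℤ, c (k+l) = b k + b l := by
      intro k l
      have h := hid4 0 1 1 (Lgen 0) (Ggen k) (Ggen l) (SV.Lgen_mem 0) (SV.Ggen_mem k)
        (SV.Ggen_mem l)
      rw [show (((0:ZMod 2)+0)*1).val = 0 by decide, pow_zero, one_smul] at h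
      rw [SV.sbk_GG, map_smul, hsk0L (k+l), hsk0G k, hsk0G l,
        SV.sbk_smul_left, SV.sbk_smul_right, SV.sbk_GG] at h
      have e1 : (2:ℂ) • (-c (k+l)) • Lgen (k+l) = (-2 * c (k+l)) • Lgen (k+l) := by module
      have e2 : (-b k) • (2:ℂ) • Lgen (k+l) + (-b l) • (2:ℂ) • Lgen (k+l)
          = (-2*b k + -2*b l) • Lgen (k+l) := by module
      have := SV.Lgen_cancel (e1.symm.trans (h.trans e2))
      linear_combination (-1/2 : ℂ) * this
    have hb0 : b 0 = 0 := by
      have h := hM 0 0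
      rw [add_zero, hc0] at h
      linear_combination (-1/2 : ℂ) * h
    have hblin : ∀ k : ℤ, b k = (k:ℂ) * b 1 := by
      have hrec : ∀ k : ℤ, b (k+1) = b k + b 1 := by
        intro k
        have h1 := hM k 1
        have h2 := hM (k+1) 0
        rw [add_zero, hb0, add_zero] at h2
        exact h2.symm.trans h1
      intro k
      induction k using Int.induction_on with
      | zero => rw [hb0]; norm_num
      | succ i ih => rw [hrec i, ih]; push_cast; ring
      | pred i ih =>
          have h := hrec (-(i:ℤ)-1)
          rw [sub_add_cancel] at h
          have h2 : b (-(i:ℤ)-1) = b (-(i:ℤ)) - b 1 := by rw [h]; ring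
          rw [h2, ih]; push_cast; ring
    have hclin : ∀ n : ℤ, c n = (n:ℂ) * b 1 := by
      intro n
      have h := hM n 0
      rw [add_zero, hb0, add_zero] at h
      rw [h, hblin n]
    -- LL sector
    have SLL : ∀ m n : ℤ, φ (Lgen m) (Lgen n) = (-(b 1)) • sbk (Lgen m) (Lgen n) := by
      intro m n
      rcases eq_or_ne n m with h | hmn
      · rw [h, hLLdiag m, SV.sbk_LL, sub_self, zero_smul, smul_zero]
      · have M := SV.master 0 φ hid3 hid4 0 0 (Lgen m) (Lgen n) (SV.Lgen_mem m)
          (SV.Lgen_mem n) m n (hLw m) (hL0L n)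
        rw [show ((0:ZMod 2)*0) = 0 by decide] at M
        simp only [ZMod.val_zero, pow_zero, one_smul] at M
        rw [hv m, hsk0L n, SV.sbk_smul_left, SV.sbk_smul_right, SV.sbk_LL] at M
        have hne : ((n:ℂ) - m) ≠ 0 := sub_ne_zero.mpr (by exact_mod_cast hmn)
        apply smul_right_injective SVir0 hne
        show ((n:ℂ) - m) • (φ (Lgen m) (Lgen n)) = ((n:ℂ) - m) • ((-(b 1)) • sbk (Lgen m) (Lgen n))
        rw [M, SV.sbk_LL, hclin m, hclin n]
        module
    -- LG sector off-diagonal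
    have SLGoff : ∀ m k : ℤ, k ≠ m →
        φ (Lgen m) (Ggen k) = (-(b 1)) • sbk (Lgen m) (Ggen k) := by
      intro m k hkm
      have M := SV.master 0 φ hid3 hid4 0 1 (Lgen m) (Ggen k) (SV.Lgen_mem m)
        (SV.Ggen_mem k) m k (hLw m) (hL0G k)
      rw [show ((0:ZMod 2)*0) = 0 by decide] at M
      simp only [ZMod.val_zero, pow_zero, one_smul] at M
      rw [hv m, hsk0G k, SV.sbk_smul_left, SV.sbk_smul_right, SV.sbk_LG] at M
      have hne : ((k:ℂ) - m) ≠ 0 := sub_ne_zero.mpr (by exact_mod_cast hkm)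
      apply smul_right_injective SVir0 hne
      show ((k:ℂ) - m) • (φ (Lgen m) (Ggen k)) = ((k:ℂ) - m) • ((-(b 1)) • sbk (Lgen m) (Ggen k))
      rw [M, SV.sbk_LG, hclin m, hblin k]
      module
    -- LG sector diagonal
    have SLG : ∀ m k : ℤ, φ (Lgen m) (Ggen k) = (-(b 1)) • sbk (Lgen m) (Ggen k) := by
      intro m k
      rcases eq_or_ne k m with h | hkm
      swap
      · exact SLGoff m k hkm
      subst h
      have E := hid4 0 0 1 (Lgen k) (Lgen 1) (Ggen (k-1)) (SV.Lgen_mem k)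
        (SV.Lgen_mem 1) (SV.Ggen_mem (k-1))
      rw [show (((0:ZMod 2)+0)*0).val = 0 by decide, pow_zero, one_smul] at E
      rw [SV.sbk_LG 1 (k-1), show 1+(k-1) = k by ring, map_smul] at E
      rw [SLL k 1, SLGoff k (k-1) (by omega)] at E
      rw [SV.sbk_LL k 1, SV.sbk_LG k (k-1)] at E
      simp only [SV.sbk_smul_left, SV.sbk_smul_right] at E
      rw [SV.sbk_LG (k+1) (k-1), SV.sbk_LG 1 (k+(k-1)),
        show (k+1)+(k-1) = k + k by ring, show 1+(k+(k-1)) = k + k by ring] at E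
      have hA : (((k-1:ℤ):ℂ) - (1:ℤ)/2) ≠ 0 := by
        intro hz
        have h2 : ((2*k - 3 : ℤ) : ℂ) = 0 := by push_cast at hz ⊢; linear_combination 2*hz
        have h3 : (2*k - 3 : ℤ) = 0 := by exact_mod_cast h2
        omega
      apply smul_right_injective SVir0 hA
      show (((k-1:ℤ):ℂ) - (1:ℤ)/2) • (φ (Lgen k) (Ggen k))
        = (((k-1:ℤ):ℂ) - (1:ℤ)/2) • ((-(b 1)) • sbk (Lgen k) (Ggen k))
      rw [E, SV.sbk_LG k k]
      push_cast
      module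
    -- GL sector
    have SGL : ∀ k m : ℤ, φ (Ggen k) (Lgen m) = (-(b 1)) • sbk (Ggen k) (Lgen m) := by
      intro k m
      have h := SV.skew_reduce (by decide)
        (hskew 1 0 (Ggen k) (Lgen m) (SV.Ggen_mem k) (SV.Lgen_mem m))
      rw [h, SLG m k, SV.sbk_LG, SV.sbk_GL]
      module
    -- GG sector off-diagonal
    have SGGoff : ∀ k l : ℤ, l ≠ k →
        φ (Ggen k) (Ggen l) = (-(b 1)) • sbk (Ggen k) (Ggen l) := by
      intro k l hlk
      have M := SV.master 0 φ hid3 hid4 1 1 (Ggen k) (Ggen l) (SV.Ggen_mem k)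
        (SV.Ggen_mem l) k l (hGw k) (hL0G l)
      rw [show ((0:ZMod 2)*1) = 0 by decide] at M
      simp only [ZMod.val_zero, pow_zero, one_smul] at M
      rw [hu k, hsk0G l, SV.sbk_smul_left, SV.sbk_smul_right, SV.sbk_GG] at M
      have hne : ((l:ℂ) - k) ≠ 0 := sub_ne_zero.mpr (by exact_mod_cast hlk)
      apply smul_right_injective SVir0 hne
      show ((l:ℂ) - k) • (φ (Ggen k) (Ggen l)) = ((l:ℂ) - k) • ((-(b 1)) • sbk (Ggen k) (Ggen l))
      rw [M, SV.sbk_GG, hblin k, hblin l]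
      module
    -- GG sector diagonal
    have SGG : ∀ k l : ℤ, φ (Ggen k) (Ggen l) = (-(b 1)) • sbk (Ggen k) (Ggen l) := by
      intro k l
      rcases eq_or_ne l k with h | hlk
      swap
      · exact SGGoff k l hlk
      have h' := h.symm
      subst h'
      have E := hid4 1 0 1 (Ggen k) (Lgen 1) (Ggen (k-1)) (SV.Ggen_mem k)
        (SV.Lgen_mem 1) (SV.Ggen_mem (k-1))
      rw [show (((0:ZMod 2)+1)*0).val = 0 by decide, pow_zero, one_smul] at E
      rw [SV.sbk_LG 1 (k-1), show 1+(k-1) = k by ring, map_smul] at E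
      rw [SGL k 1, SGGoff k (k-1) (by omega)] at E
      rw [SV.sbk_GL k 1, SV.sbk_GG k (k-1)] at E
      simp only [SV.sbk_smul_left, SV.sbk_smul_right] at E
      rw [SV.sbk_GG (1+k) (k-1), SV.sbk_LL 1 (k+(k-1)),
        show (1+k)+(k-1) = k + k by ring, show 1+(k+(k-1)) = k + k by ring] at E
      have hA : (((k-1:ℤ):ℂ) - (1:ℤ)/2) ≠ 0 := by
        intro hz
        have h2 : ((2*k - 3 : ℤ) : ℂ) = 0 := by push_cast at hz ⊢; linear_combination 2*hz
        have h3 : (2*k - 3 : ℤ) = 0 := by exact_mod_cast h2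
        omega
      apply smul_right_injective SVir0 hA
      show (((k-1:ℤ):ℂ) - (1:ℤ)/2) • (φ (Ggen k) (Ggen k))
        = (((k-1:ℤ):ℂ) - (1:ℤ)/2) • ((-(b 1)) • sbk (Ggen k) (Ggen k))
      rw [E, SV.sbk_GG k k]
      push_cast
      module
    exact ⟨-(b 1), SV.final_wrap φ (-(b 1)) SLL SLG SGL SGG⟩
  · -- ============================ d = 1 =================================
    have hvmem : ∀ n:ℤ, (φ (Lgen n) (Lgen 0)).1 = 0 := by
      intro n
      have h := hgrad 0 0 (Lgen n) (Lgen 0) (SV.Lgen_mem n) (SV.Lgen_mem 0)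
      rw [show (0+0+1 : ZMod 2) = 1 by decide] at h
      exact (SV.mem_grad1 _).mp h
    have humem : ∀ k:ℤ, (φ (Ggen k) (Lgen 0)).2 = 0 := by
      intro k
      have h := hgrad 1 0 (Ggen k) (Lgen 0) (SV.Ggen_mem k) (SV.Lgen_mem 0)
      rw [show (1+0+1 : ZMod 2) = 0 by decide] at h
      exact (SV.mem_grad0 _).mp h
    have hv0 : ∀ n:ℤ, ∃ a : ℂ, φ (Lgen n) (Lgen 0) = a • Ggen n := fun n =>
      ⟨_, SV.weight_odd _ n (hwt 0 (Lgen n) n (SV.Lgen_mem n) (hLw n)) (hvmem n)⟩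
    choose c hv using hv0
    have hu0 : ∀ k:ℤ, ∃ a : ℂ, φ (Ggen k) (Lgen 0) = a • Lgen k := fun k =>
      ⟨_, SV.weight_even _ k (hwt 1 (Ggen k) k (SV.Ggen_mem k) (hGw k)) (humem k)⟩
    choose b hu using hu0
    have hsk0L : ∀ n:ℤ, φ (Lgen 0) (Lgen n) = (-(c n)) • Ggen n := by
      intro n
      have h := SV.skew_reduce (by decide)
        (hskew 0 0 (Lgen 0) (Lgen n) (SV.Lgen_mem 0) (SV.Lgen_mem n))
      rw [h, hv n]
      module
    have hsk0G : ∀ k:ℤ, φ (Lgen 0) (Ggen k) = (-(b k)) • Lgen k := by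
      intro k
      have h := SV.skew_reduce (by decide)
        (hskew 0 1 (Lgen 0) (Ggen k) (SV.Lgen_mem 0) (SV.Ggen_mem k))
      rw [h, hu k]
      module
    have hc0 : c 0 = 0 := SV.Ggen_smul_zero ((hv 0).symm.trans hLL0)
    have hdag : ∀ n:ℤ, 2 * c n = (n:ℂ) * b 0 - ((n:ℂ)/2) * (b n) := by
      intro n
      have h := hid4 0 0 1 (Lgen 0) (Lgen n) (Ggen 0) (SV.Lgen_mem 0) (SV.Lgen_mem n)
        (SV.Ggen_mem 0)
      rw [show (((1:ZMod 2)+0)*0).val = 0 by decide, pow_zero, one_smul] at h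
      rw [SV.sbk_LG n 0, show n+(0:ℤ) = n by ring, map_smul, hsk0G n,
        hsk0L n, hsk0G 0, SV.sbk_smul_left, SV.sbk_smul_right, SV.sbk_GG n 0, hLw n,
        show n+(0:ℤ) = n by ring] at h
      have e1 : (((0:ℤ):ℂ) - (n:ℂ)/2) • (-(b n)) • Lgen n
          = ((n:ℂ)/2 * b n) • Lgen n := by push_cast; module
      have e2 : (-(c n)) • (2:ℂ) • Lgen n + (-(b 0)) • (-(n:ℂ)) • Lgen n
          = (-2*c n + (n:ℂ)*b 0) • Lgen n := by module
      have h3 := SV.Lgen_cancel (e1.symm.trans (h.trans e2))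
      linear_combination h3
    have hbsym : ∀ k:ℤ, k ≠ 0 → b (-k) = b k := by
      intro k hk
      have h := hid4 0 1 1 (Lgen 0) (Ggen k) (Ggen (-k)) (SV.Lgen_mem 0) (SV.Ggen_mem k)
        (SV.Ggen_mem (-k))
      rw [show (((1:ZMod 2)+0)*1).val = 1 by decide, pow_one] at h
      rw [SV.sbk_GG k (-k), show k + -k = (0:ℤ) by ring, map_smul, hLL0, smul_zero,
        hsk0G k, hsk0G (-k), SV.sbk_smul_left, SV.sbk_smul_right, SV.sbk_LG k (-k),
        SV.sbk_GL k (-k), show k + -k = (0:ℤ) by ring, show -k + k = (0:ℤ) by ring] at h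
      have e2 : (-(b k)) • ((((-k:ℤ)):ℂ) - (k:ℂ)/2) • Ggen (0:ℤ)
          + (-1:ℂ) • (-(b (-k))) • (-(((k:ℂ)) - (((-k:ℤ)):ℂ)/2)) • Ggen (0:ℤ)
          = ((3*(k:ℂ)/2) * (b k - b (-k))) • Ggen (0:ℤ) := by push_cast; module
      have h3 := SV.Ggen_smul_zero ((h.trans e2).symm)
      rcases mul_eq_zero.mp h3 with hl | hr
      · exfalso
        have : (k:ℂ) = 0 := by linear_combination (2/3 : ℂ) * hl
        exact hk (by exact_mod_cast this)
      · exact (sub_eq_zero.mp hr).symm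
    have hbconst : ∀ n:ℤ, n ≠ 0 → b n = b 0 := by
      intro n hn
      have h := hid4 0 0 1 (Lgen 0) (Lgen n) (Ggen (-n)) (SV.Lgen_mem 0) (SV.Lgen_mem n)
        (SV.Ggen_mem (-n))
      rw [show (((1:ZMod 2)+0)*0).val = 0 by decide, pow_zero, one_smul] at h
      rw [SV.sbk_LG n (-n), show n + -n = (0:ℤ) by ring, map_smul, hsk0G 0,
        hsk0L n, hsk0G (-n), SV.sbk_smul_left, SV.sbk_smul_right, SV.sbk_GG n (-n),
        SV.sbk_LL n (-n), show n + -n = (0:ℤ) by ring] at h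
      have e1 : ((((-n:ℤ)):ℂ) - (n:ℂ)/2) • (-(b 0)) • Lgen (0:ℤ)
          = ((3*(n:ℂ)/2) * b 0) • Lgen (0:ℤ) := by push_cast; module
      have e2 : (-(c n)) • (2:ℂ) • Lgen (0:ℤ)
          + (-(b (-n))) • ((((-n:ℤ)):ℂ) - (n:ℂ)) • Lgen (0:ℤ)
          = (-2*c n + 2*(n:ℂ)*(b (-n))) • Lgen (0:ℤ) := by push_cast; module
      have h3 := SV.Lgen_cancel (e1.symm.trans (h.trans e2))
      have h4 := hdag n
      have h5 := hbsym n hn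
      have h6 : (5*(n:ℂ)/2) * (b n - b 0) = 0 := by
        linear_combination (-1:ℂ)*h3 + h4 + (-2*(n:ℂ))*h5
      rcases mul_eq_zero.mp h6 with hl | hr
      · exfalso
        have : (n:ℂ) = 0 := by linear_combination (2/5 : ℂ) * hl
        exact hn (by exact_mod_cast this)
      · exact sub_eq_zero.mp hr
    have LLval : ∀ m p : ℤ, ((p:ℂ) - m) • φ (Lgen m) (Lgen p)
        = (-(c m) * ((m:ℂ) - (p:ℂ)/2) - c p * ((p:ℂ) - (m:ℂ)/2)) • Ggen (m+p) := by
      intro m p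
      have M := SV.master 1 φ hid3 hid4 0 0 (Lgen m) (Lgen p) (SV.Lgen_mem m)
        (SV.Lgen_mem p) m p (hLw m) (hL0L p)
      rw [show ((1:ZMod 2)*0) = 0 by decide] at M
      simp only [ZMod.val_zero, pow_zero, one_smul] at M
      rw [hv m, hsk0L p, SV.sbk_smul_left, SV.sbk_smul_right, SV.sbk_GL m p,
        SV.sbk_LG m p, show p+m = m+p by ring] at M
      exact M.trans (by module)
    have h23 : φ (Lgen 2) (Lgen 3)
        = (-(c 2) * ((2:ℂ) - (3:ℂ)/2) - c 3 * ((3:ℂ) - (2:ℂ)/2)) • Ggen (2+3) := by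
      apply smul_right_injective SVir0 (show (((3:ℤ):ℂ) - ((2:ℤ):ℂ)) ≠ 0 by norm_num)
      show (((3:ℤ):ℂ) - ((2:ℤ):ℂ)) • (φ (Lgen 2) (Lgen 3))
        = (((3:ℤ):ℂ) - ((2:ℤ):ℂ)) • ((-(c 2) * ((2:ℂ) - (3:ℂ)/2) - c 3 * ((3:ℂ) - (2:ℂ)/2)) • Ggen (2+3))
      rw [LLval 2 3]
      push_cast
      module
    have h2m1 : φ (Lgen 2) (Lgen (-1))
        = ((-1/3) * (-(c 2) * ((2:ℂ) - (-1:ℂ)/2) - c (-1) * ((-1:ℂ) - (2:ℂ)/2))) • Ggen (2 + -1) := by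
      apply smul_right_injective SVir0 (show ((((-1:ℤ)):ℂ) - ((2:ℤ):ℂ)) ≠ 0 by norm_num)
      show ((((-1:ℤ)):ℂ) - ((2:ℤ):ℂ)) • (φ (Lgen 2) (Lgen (-1)))
        = ((((-1:ℤ)):ℂ) - ((2:ℤ):ℂ)) • (((-1/3) * (-(c 2) * ((2:ℂ) - (-1:ℂ)/2) - c (-1) * ((-1:ℂ) - (2:ℂ)/2))) • Ggen (2 + -1))
      rw [LLval 2 (-1)]
      push_cast
      module
    have hb0 : b 0 = 0 := by
      have E := hid4 0 0 0 (Lgen 2) (Lgen 3) (Lgen (-1)) (SV.Lgen_mem 2) (SV.Lgen_mem 3)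
        (SV.Lgen_mem (-1))
      rw [show (((1:ZMod 2)+0)*0).val = 0 by decide, pow_zero, one_smul] at E
      rw [SV.sbk_LL 3 (-1), show (3:ℤ) + -1 = 2 by ring, map_smul, hLLdiag 2, smul_zero] at E
      have e2 : sbk (φ (Lgen 2) (Lgen 3)) (Lgen (-1)) + sbk (Lgen 3) (φ (Lgen 2) (Lgen (-1)))
          = ((7/3)*c 2 + 11*c 3 + (1/3)*c (-1)) • Ggen (4:ℤ) := by
        rw [h23, h2m1, SV.sbk_smul_left, SV.sbk_smul_right, SV.sbk_GL (2+3) (-1),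
          SV.sbk_LG 3 (2 + -1), show (-1 + (2+3) : ℤ) = (4:ℤ) by ring,
          show (3 + (2 + -1) : ℤ) = (4:ℤ) by ring]
        push_cast
        module
      have h6 := SV.Ggen_smul_zero ((E.trans e2).symm)
      have hc2 : c 2 = b 0 / 2 := by
        have h := hdag 2
        rw [hbconst 2 (by norm_num)] at h
        push_cast at h
        linear_combination (1/2 : ℂ) * h
      have hc3 : c 3 = 3 * b 0 / 4 := by
        have h := hdag 3
        rw [hbconst 3 (by norm_num)] at h
        push_cast at h
        linear_combination (1/2 : ℂ) * h
      have hcm1 : c (-1) = -(b 0) / 4 := by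
        have h := hdag (-1)
        rw [hbconst (-1) (by norm_num)] at h
        push_cast at h
        linear_combination (1/2 : ℂ) * h
      rw [hc2, hc3, hcm1] at h6
      linear_combination (3/28 : ℂ) * h6
    have hb : ∀ n:ℤ, b n = 0 := by
      intro n
      rcases eq_or_ne n 0 with rfl | h
      · exact hb0
      · rw [hbconst n h]; exact hb0
    have hcz : ∀ n:ℤ, c n = 0 := by
      intro n
      have h := hdag n
      rw [hb n, hb 0] at h
      linear_combination (1/2 : ℂ) * h
    -- sectors, all zero
    have ZLL : ∀ m n : ℤ, φ (Lgen m) (Lgen n) = 0 := by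
      intro m n
      rcases eq_or_ne n m with h | hmn
      · rw [h]; exact hLLdiag m
      · have hne : ((n:ℂ) - m) ≠ 0 := sub_ne_zero.mpr (by exact_mod_cast hmn)
        have M := LLval m n
        rw [hcz m, hcz n] at M
        have h0 : ((n:ℂ) - m) • φ (Lgen m) (Lgen n) = 0 := M.trans (by module)
        exact ((smul_eq_zero (R := ℂ) (M := SVir0)).mp h0).resolve_left hne
    have ZLGoff : ∀ m k : ℤ, k ≠ m → φ (Lgen m) (Ggen k) = 0 := by
      intro m k hkm
      have M := SV.master 1 φ hid3 hid4 0 1 (Lgen m) (Ggen k) (SV.Lgen_mem m)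
        (SV.Ggen_mem k) m k (hLw m) (hL0G k)
      rw [show ((1:ZMod 2)*0) = 0 by decide] at M
      simp only [ZMod.val_zero, pow_zero, one_smul] at M
      rw [hv m, hsk0G k, SV.sbk_smul_left, SV.sbk_smul_right, SV.sbk_GG m k,
        SV.sbk_LL m k, hcz m, hb k] at M
      have hne : ((k:ℂ) - m) ≠ 0 := sub_ne_zero.mpr (by exact_mod_cast hkm)
      have h0 : ((k:ℂ) - m) • φ (Lgen m) (Ggen k) = 0 := M.trans (by module)
      exact ((smul_eq_zero (R := ℂ) (M := SVir0)).mp h0).resolve_left hne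
    have ZLG : ∀ m k : ℤ, φ (Lgen m) (Ggen k) = 0 := by
      intro m k
      rcases eq_or_ne k m with h | hkm
      swap
      · exact ZLGoff m k hkm
      subst h
      have E := hid4 0 0 1 (Lgen k) (Lgen 1) (Ggen (k-1)) (SV.Lgen_mem k)
        (SV.Lgen_mem 1) (SV.Ggen_mem (k-1))
      rw [show (((1:ZMod 2)+0)*0).val = 0 by decide, pow_zero, one_smul] at E
      rw [SV.sbk_LG 1 (k-1), show 1+(k-1) = k by ring, map_smul, ZLL k 1,
        ZLGoff k (k-1) (by omega), SV.sbk_zero_left, SV.sbk_zero_right, add_zero] at E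
      have hA : (((k-1:ℤ):ℂ) - (1:ℤ)/2) ≠ 0 := by
        intro hz
        have h2 : ((2*k - 3 : ℤ) : ℂ) = 0 := by push_cast at hz ⊢; linear_combination 2*hz
        have h3 : (2*k - 3 : ℤ) = 0 := by exact_mod_cast h2
        omega
      exact ((smul_eq_zero (R := ℂ) (M := SVir0)).mp E).resolve_left hA
    have ZGL : ∀ k m : ℤ, φ (Ggen k) (Lgen m) = 0 := by
      intro k m
      have h := SV.skew_reduce (by decide)
        (hskew 1 0 (Ggen k) (Lgen m) (SV.Ggen_mem k) (SV.Lgen_mem m))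
      rw [h, ZLG m k, neg_zero]
    have ZGGoff : ∀ k l : ℤ, l ≠ k → φ (Ggen k) (Ggen l) = 0 := by
      intro k l hlk
      have M := SV.master 1 φ hid3 hid4 1 1 (Ggen k) (Ggen l) (SV.Ggen_mem k)
        (SV.Ggen_mem l) k l (hGw k) (hL0G l)
      rw [show (((1:ZMod 2))*1).val = 1 by decide, pow_one] at M
      rw [hu k, hsk0G l, SV.sbk_smul_left, SV.sbk_smul_right, SV.sbk_LG k l,
        SV.sbk_GL k l, hb k, hb l] at M
      have hne : ((l:ℂ) - k) ≠ 0 := sub_ne_zero.mpr (by exact_mod_cast hlk)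
      have h0 : ((l:ℂ) - k) • φ (Ggen k) (Ggen l) = 0 := M.trans (by module)
      exact ((smul_eq_zero (R := ℂ) (M := SVir0)).mp h0).resolve_left hne
    have ZGG : ∀ k l : ℤ, φ (Ggen k) (Ggen l) = 0 := by
      intro k l
      rcases eq_or_ne l k with h | hlk
      swap
      · exact ZGGoff k l hlk
      have h' := h.symm
      subst h'
      have E := hid4 1 0 1 (Ggen k) (Lgen 1) (Ggen (k-1)) (SV.Ggen_mem k)
        (SV.Lgen_mem 1) (SV.Ggen_mem (k-1))
      rw [show (((1:ZMod 2)+1)*0).val = 0 by decide, pow_zero, one_smul] at E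
      rw [SV.sbk_LG 1 (k-1), show 1+(k-1) = k by ring, map_smul, ZGL k 1,
        ZGGoff k (k-1) (by omega), SV.sbk_zero_left, SV.sbk_zero_right, add_zero] at E
      have hA : (((k-1:ℤ):ℂ) - (1:ℤ)/2) ≠ 0 := by
        intro hz
        have h2 : ((2*k - 3 : ℤ) : ℂ) = 0 := by push_cast at hz ⊢; linear_combination 2*hz
        have h3 : (2*k - 3 : ℤ) = 0 := by exact_mod_cast h2
        omega
      exact ((smul_eq_zero (R := ℂ) (M := SVir0)).mp E).resolve_left hA
    refine ⟨0, SV.final_wrap φ 0 ?_ ?_ ?_ ?_⟩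
    · intro m n; rw [zero_smul]; exact ZLL m n
    · intro m k; rw [zero_smul]; exact ZLG m k
    · intro k m; rw [zero_smul]; exact ZGL k m
    · intro k l; rw [zero_smul]; exact ZGG k l
end

section
/- Let φ be a super-biderivation of homogeneous degree on the centerless super-Virasoro algebra S(0). Then there exists λ ∈ ℂ such that φ(L₀, z) = λ[L₀, z] for all z ∈ S(0); in particular φ(L₀, L_n) = nλ L_n for all n ∈ ℤ and φ(L₀, G_n) = nλ G_n for all n ∈ ℤ. -/
theorem Finsupp.sum_zero {α M N : Type*} [Zero M] [AddCommMonoid N] {f : α →₀ M} :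
    (f.sum fun _ _ => (0 : N)) = 0 :=
  Finset.sum_const_zero

lemma sbk_LL (m n : ℤ) : sbk (Lgen m) (Lgen n) = ((n:ℂ) - m) • Lgen (m+n) := by
  simp only [sbk, Lgen, Finsupp.sum_zero_index, Finsupp.sum_single_index, zero_mul, mul_zero,
    Finsupp.single_zero, Finsupp.sum_zero, one_mul, add_zero, zero_add, Prod.smul_mk,
    Finsupp.smul_single, smul_zero, smul_eq_mul, mul_one, Prod.mk.injEq]

lemma sbk_LG (m k : ℤ) : sbk (Lgen m) (Ggen k) = ((k:ℂ) - m/2) • Ggen (m+k) := by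
  simp only [sbk, Lgen, Ggen, Finsupp.sum_zero_index, Finsupp.sum_single_index, zero_mul, mul_zero,
    Finsupp.single_zero, Finsupp.sum_zero, one_mul, add_zero, zero_add, Prod.smul_mk,
    Finsupp.smul_single, smul_zero, smul_eq_mul, mul_one, Prod.mk.injEq, neg_zero]

lemma sbk_GL (k m : ℤ) : sbk (Ggen k) (Lgen m) = (-((k:ℂ) - m/2)) • Ggen (m+k) := by
  simp only [sbk, Lgen, Ggen, Finsupp.sum_zero_index, Finsupp.sum_single_index, zero_mul, mul_zero,
    Finsupp.single_zero, Finsupp.sum_zero, one_mul, add_zero, zero_add, Prod.smul_mk,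
    Finsupp.smul_single, smul_zero, smul_eq_mul, mul_one, Prod.mk.injEq, neg_zero, neg_mul, mul_neg]

lemma sbk_GG (k l : ℤ) : sbk (Ggen k) (Ggen l) = (2:ℂ) • Lgen (k+l) := by
  simp only [sbk, Lgen, Ggen, Finsupp.sum_zero_index, Finsupp.sum_single_index, zero_mul, mul_zero,
    Finsupp.single_zero, Finsupp.sum_zero, one_mul, mul_one, add_zero, zero_add, Prod.smul_mk,
    Finsupp.smul_single, smul_zero, smul_eq_mul, Prod.mk.injEq, neg_zero]

lemma sbk_zero_left (y : SVir0) : sbk 0 y = 0 := by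
  simp [sbk]



lemma sum2_smul_left (c : ℂ) (f g : ℤ →₀ ℂ) (F : ℤ → ℂ → ℤ → ℂ → (ℤ →₀ ℂ))
    (h0 : ∀ i j b, F i 0 j b = 0) (hsm : ∀ i a j b, F i (c * a) j b = c • F i a j b) :
    ((c • f).sum fun i a => g.sum fun j b => F i a j b)
      = c • f.sum fun i a => g.sum fun j b => F i a j b := by
  rw [Finsupp.sum_smul_index (fun i => by simp [h0]), Finsupp.smul_sum]
  refine Finsupp.sum_congr fun i _ => ?_
  rw [Finsupp.smul_sum]
  exact Finsupp.sum_congr fun j _ => hsm i _ j _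

lemma sum2_smul_right (c : ℂ) (f g : ℤ →₀ ℂ) (F : ℤ → ℂ → ℤ → ℂ → (ℤ →₀ ℂ))
    (h0 : ∀ i a j, F i a j 0 = 0) (hsm : ∀ i a j b, F i a j (c * b) = c • F i a j b) :
    (f.sum fun i a => (c • g).sum fun j b => F i a j b)
      = c • f.sum fun i a => g.sum fun j b => F i a j b := by
  rw [Finsupp.smul_sum]
  refine Finsupp.sum_congr fun i _ => ?_
  rw [Finsupp.sum_smul_index (fun j => by simp [h0]), Finsupp.smul_sum]
  exact Finsupp.sum_congr fun j b => hsm i _ j _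

lemma sbk_smul_left (c : ℂ) (x y : SVir0) : sbk (c • x) y = c • sbk x y := by
  apply Prod.ext <;>
    simp only [sbk, Prod.smul_fst, Prod.smul_snd] <;> rw [smul_add] <;> congr 1
  · exact sum2_smul_left c x.1 y.1 _ (by intros; simp) (by intros; rw [Finsupp.smul_single]; congr 1; rw [smul_eq_mul]; ring)
  · exact sum2_smul_left c x.2 y.2 _ (by intros; simp) (by intros; rw [Finsupp.smul_single]; congr 1; rw [smul_eq_mul]; ring)
  · exact sum2_smul_left c x.1 y.2 _ (by intros; simp) (by intros; rw [Finsupp.smul_single]; congr 1; rw [smul_eq_mul]; ring)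
  · exact sum2_smul_left c x.2 y.1 _ (by intros; simp) (by intros; rw [Finsupp.smul_single]; congr 1; rw [smul_eq_mul]; ring)

lemma sbk_smul_right (c : ℂ) (x y : SVir0) : sbk x (c • y) = c • sbk x y := by
  apply Prod.ext <;>
    simp only [sbk, Prod.smul_fst, Prod.smul_snd] <;> rw [smul_add] <;> congr 1
  · exact sum2_smul_right c x.1 y.1 _ (by intros; simp) (by intros; rw [Finsupp.smul_single]; congr 1; rw [smul_eq_mul]; ring)
  · exact sum2_smul_right c x.2 y.2 _ (by intros; simp) (by intros; rw [Finsupp.smul_single]; congr 1; rw [smul_eq_mul]; ring)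
  · exact sum2_smul_right c x.1 y.2 _ (by intros; simp) (by intros; rw [Finsupp.smul_single]; congr 1; rw [smul_eq_mul]; ring)
  · exact sum2_smul_right c x.2 y.1 _ (by intros; simp) (by intros; rw [Finsupp.smul_single]; congr 1; rw [smul_eq_mul]; ring)


noncomputable def W : (ℤ →₀ ℂ) →ₗ[ℂ] (ℤ →₀ ℂ) :=
  Finsupp.lsum ℂ fun n => (Finsupp.lsingle n).comp ((n : ℂ) • LinearMap.id)

noncomputable def adL0 : SVir0 →ₗ[ℂ] SVir0 := W.prodMap W

lemma W_single (n : ℤ) (c : ℂ) : W (Finsupp.single n c) = Finsupp.single n ((n : ℂ) * c) := by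
  simp only [W, Finsupp.lsum_single, LinearMap.coe_comp, Function.comp_apply,
    LinearMap.smul_apply, LinearMap.id_apply, Finsupp.lsingle_apply, smul_eq_mul]

lemma W_def (f : ℤ →₀ ℂ) : W f = f.sum fun n b => Finsupp.single n ((n : ℂ) * b) := by
  induction f using Finsupp.induction_linear with
  | zero => rw [map_zero, Finsupp.sum_zero_index]
  | add f g hf hg =>
      rw [map_add, hf, hg, Finsupp.sum_add_index (fun i _ => by rw [mul_zero, Finsupp.single_zero])
        (fun i _ b1 b2 => by rw [mul_add, Finsupp.single_add])]
  | single n c =>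
      rw [W_single, Finsupp.sum_single_index (by rw [mul_zero, Finsupp.single_zero])]

lemma W_apply (f : ℤ →₀ ℂ) (j : ℤ) : W f j = (j : ℂ) * f j := by
  induction f using Finsupp.induction_linear with
  | zero => rw [map_zero, Finsupp.zero_apply, mul_zero]
  | add f g hf hg => rw [map_add, Finsupp.add_apply, hf, hg, Finsupp.add_apply]; ring
  | single n c =>
      rw [W_single, Finsupp.single_apply, Finsupp.single_apply]
      rcases eq_or_ne n j with rfl | h
      · rw [if_pos rfl, if_pos rfl]
      · rw [if_neg h, if_neg h, mul_zero]

lemma sbk_L0 (z : SVir0) : sbk (Lgen 0) z = adL0 z := by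
  apply Prod.ext <;>
    simp only [sbk, Lgen, adL0, LinearMap.prodMap_apply, Finsupp.sum_zero_index,
      Finsupp.sum_single_index, zero_mul, mul_zero, Finsupp.single_zero, Finsupp.sum_zero,
      one_mul, add_zero, zero_add, Prod.fst, Prod.snd, neg_zero, W_def] <;>
    refine Finsupp.sum_congr fun n _ => by push_cast; congr 1 <;> ring

lemma Lgen_mem (m : ℤ) : Lgen m ∈ grad 0 := by
  simp only [grad, if_pos rfl]; exact rfl

lemma Ggen_mem (k : ℤ) : Ggen k ∈ grad 1 := by
  simp only [grad, if_neg (by decide : (1 : ZMod 2) ≠ 0)]; exact rfl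

lemma mem_grad_zero {u : SVir0} : u ∈ grad 0 ↔ u.2 = 0 := by
  simp only [grad, if_pos rfl]; exact Iff.rfl

lemma mem_grad_one {u : SVir0} : u ∈ grad 1 ↔ u.1 = 0 := by
  simp only [grad, if_neg (by decide : (1 : ZMod 2) ≠ 0)]; exact Iff.rfl

lemma eig0 {n : ℤ} {f : ℤ →₀ ℂ} (h : ∀ j : ℤ, (j : ℂ) * f j = (n : ℂ) * f j) :
    f = Finsupp.single n (f n) := by
  ext j
  rcases eq_or_ne n j with rfl | hj
  · rw [Finsupp.single_apply, if_pos rfl]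
  · rw [Finsupp.single_apply, if_neg hj]
    have h2 : ((j : ℂ) - n) * f j = 0 := by linear_combination h j
    rcases mul_eq_zero.mp h2 with h3 | h3
    · exact absurd (by exact_mod_cast sub_eq_zero.mp h3) (Ne.symm hj)
    · exact h3

lemma Lgen_smul_inj {c c' : ℂ} {m : ℤ} (h : c • Lgen m = c' • Lgen m) : c = c' := by
  have := congrArg (fun u : SVir0 => u.1 m) h
  simpa [Lgen, Finsupp.single_eq_same] using this

lemma Ggen_smul_inj {c c' : ℂ} {k : ℤ} (h : c • Ggen k = c' • Ggen k) : c = c' := by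
  have := congrArg (fun u : SVir0 => u.2 k) h
  simpa [Ggen, Finsupp.single_eq_same] using this

lemma eigen_even {n : ℤ} {u : SVir0} (hpar : u.2 = 0) (h : adL0 u = (n : ℂ) • u) :
    u = (u.1 n) • Lgen n := by
  have h1 : u.1 = Finsupp.single n (u.1 n) := by
    refine eig0 fun j => ?_
    have := congrArg (fun v : SVir0 => v.1 j) h
    simpa [adL0, W_apply] using this
  apply Prod.ext
  · show u.1 = u.1 n • Finsupp.single n 1
    rw [Finsupp.smul_single, smul_eq_mul, mul_one]; exact h1
  · show u.2 = u.1 n • (0 : ℤ →₀ ℂ)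
    rw [smul_zero, hpar]

lemma eigen_odd {n : ℤ} {u : SVir0} (hpar : u.1 = 0) (h : adL0 u = (n : ℂ) • u) :
    u = (u.2 n) • Ggen n := by
  have h1 : u.2 = Finsupp.single n (u.2 n) := by
    refine eig0 fun j => ?_
    have := congrArg (fun v : SVir0 => v.2 j) h
    simpa [adL0, W_apply] using this
  apply Prod.ext
  · show u.1 = u.2 n • (0 : ℤ →₀ ℂ)
    rw [smul_zero, hpar]
  · show u.2 = u.2 n • Finsupp.single n 1
    rw [Finsupp.smul_single, smul_eq_mul, mul_one]; exact h1

lemma eigen_odd' {n : ℤ} {r : ℂ} {u : SVir0} (hpar : u.1 = 0)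
    (h : adL0 u = (n : ℂ) • u + r • Ggen n) : r = 0 ∧ u = (u.2 n) • Ggen n := by
  have key : ∀ j : ℤ, (j : ℂ) * u.2 j = (n : ℂ) * u.2 j + r * (Finsupp.single n (1:ℂ)) j := by
    intro j
    have := congrArg (fun v : SVir0 => v.2 j) h
    simpa [adL0, W_apply, Ggen, Finsupp.single_apply] using this
  have hr : r = 0 := by
    have := key n
    rw [Finsupp.single_eq_same, mul_one] at this
    linear_combination -this
  refine ⟨hr, ?_⟩
  apply eigen_odd hpar
  rw [h, hr, zero_smul, add_zero]

lemma adL0_L (n : ℤ) : adL0 (Lgen n) = (n : ℂ) • Lgen n := by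
  apply Prod.ext
  · show W (Finsupp.single n 1) = (n : ℂ) • Finsupp.single n 1
    rw [W_single, Finsupp.smul_single, smul_eq_mul]
  · show W 0 = (n : ℂ) • (0 : ℤ →₀ ℂ)
    rw [map_zero, smul_zero]

lemma adL0_G (n : ℤ) : adL0 (Ggen n) = (n : ℂ) • Ggen n := by
  apply Prod.ext
  · show W 0 = (n : ℂ) • (0 : ℤ →₀ ℂ)
    rw [map_zero, smul_zero]
  · show W (Finsupp.single n 1) = (n : ℂ) • Finsupp.single n 1
    rw [W_single, Finsupp.smul_single, smul_eq_mul]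

lemma decomp (z : SVir0) :
    z = z.1.sum (fun n a => a • Lgen n) + z.2.sum (fun k b => b • Ggen k) := by
  apply Prod.ext
  · have h1 : (z.1.sum fun n a => a • Lgen n).1 = z.1.sum fun n a => Finsupp.single n a := by
      rw [Finsupp.sum, Finsupp.sum, Prod.fst_sum]
      refine Finset.sum_congr rfl fun n _ => ?_
      show (z.1 n) • Finsupp.single n (1:ℂ) = _
      rw [Finsupp.smul_single, smul_eq_mul, mul_one]
    have h2 : (z.2.sum fun k b => b • Ggen k).1 = 0 := by
      rw [Finsupp.sum, Prod.fst_sum]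
      refine Finset.sum_eq_zero fun k _ => ?_
      show (z.2 k) • (0 : ℤ →₀ ℂ) = 0
      rw [smul_zero]
    show z.1 = _
    rw [Prod.fst_add, h1, h2, add_zero, Finsupp.sum_single]
  · have h1 : (z.1.sum fun n a => a • Lgen n).2 = 0 := by
      rw [Finsupp.sum, Prod.snd_sum]
      refine Finset.sum_eq_zero fun k _ => ?_
      show (z.1 k) • (0 : ℤ →₀ ℂ) = 0
      rw [smul_zero]
    have h2 : (z.2.sum fun k b => b • Ggen k).2 = z.2.sum fun k b => Finsupp.single k b := by
      rw [Finsupp.sum, Finsupp.sum, Prod.snd_sum]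
      refine Finset.sum_congr rfl fun n _ => ?_
      show (z.2 n) • Finsupp.single n (1:ℂ) = _
      rw [Finsupp.smul_single, smul_eq_mul, mul_one]
    show z.2 = _
    rw [Prod.snd_add, h1, h2, zero_add, Finsupp.sum_single]

lemma conclude (φ : SVir0 →ₗ[ℂ] SVir0 →ₗ[ℂ] SVir0) (lam : ℂ)
    (hL : ∀ n : ℤ, φ (Lgen 0) (Lgen n) = ((n : ℂ) * lam) • Lgen n)
    (hG : ∀ n : ℤ, φ (Lgen 0) (Ggen n) = ((n : ℂ) * lam) • Ggen n) :
    ∀ z : SVir0, φ (Lgen 0) z = lam • sbk (Lgen 0) z := by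
  intro z
  rw [sbk_L0]
  conv_lhs => rw [decomp z]
  conv_rhs => rw [decomp z]
  rw [map_add, map_finsuppSum, map_finsuppSum, map_add (adL0), map_finsuppSum,
    map_finsuppSum, smul_add, Finsupp.smul_sum, Finsupp.smul_sum]
  congr 1
  · refine Finsupp.sum_congr fun n _ => ?_
    rw [map_smul, hL, map_smul, adL0_L, smul_smul, smul_smul, smul_smul]
    congr 1; ring
  · refine Finsupp.sum_congr fun k _ => ?_
    rw [map_smul, hG, map_smul, adL0_G, smul_smul, smul_smul, smul_smul]
    congr 1; ring

lemma case_d0 (φ : SVir0 →ₗ[ℂ] SVir0 →ₗ[ℂ] SVir0) (hφ : IsSuperBiderivationSV 0 φ) :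
    ∃ lam : ℂ,
      (∀ n : ℤ, φ (Lgen 0) (Lgen n) = ((n : ℂ) * lam) • Lgen n) ∧
      (∀ n : ℤ, φ (Lgen 0) (Ggen n) = ((n : ℂ) * lam) • Ggen n) := by
  obtain ⟨h1, h2, h3, h4⟩ := hφ
  -- φ(L0, L0) = 0
  have hL00 : φ (Lgen 0) (Lgen 0) = 0 := by
    have h := h2 0 0 (Lgen 0) (Lgen 0) (Lgen_mem 0) (Lgen_mem 0)
    rw [show ((0 : ZMod 2) * 0).val = 0 by decide, pow_zero] at h
    have haa : φ (Lgen 0) (Lgen 0) + φ (Lgen 0) (Lgen 0) = 0 := by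
      nth_rewrite 1 [h]
      module
    have h2' : (2 : ℂ) • φ (Lgen 0) (Lgen 0) = 0 :=
      (two_smul ℂ _).trans haa
    simpa using (smul_eq_zero.mp h2').resolve_left (by norm_num)
  -- specialization of the derivation identity
  have hd4 : ∀ (β γ : ZMod 2) (y z : SVir0), y ∈ grad β → z ∈ grad γ →
      φ (Lgen 0) (sbk y z) = sbk (φ (Lgen 0) y) z + sbk y (φ (Lgen 0) z) := by
    intro β γ y z hy hz
    have h := h4 0 β γ (Lgen 0) y z (Lgen_mem 0) hy hz
    rw [show ((0 + 0 : ZMod 2) * β) = 0 by ring, show ((0:ZMod 2)).val = 0 from rfl,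
      pow_zero, one_smul] at h
    exact h
  -- parities
  have parL : ∀ n : ℤ, (φ (Lgen 0) (Lgen n)).2 = 0 := by
    intro n
    have h := h1 0 0 (Lgen 0) (Lgen n) (Lgen_mem 0) (Lgen_mem n)
    rw [show (0 + 0 + 0 : ZMod 2) = 0 by decide] at h
    exact mem_grad_zero.mp h
  have parG : ∀ n : ℤ, (φ (Lgen 0) (Ggen n)).1 = 0 := by
    intro n
    have h := h1 0 1 (Lgen 0) (Ggen n) (Lgen_mem 0) (Ggen_mem n)
    rw [show (0 + 1 + 0 : ZMod 2) = 1 by decide] at h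
    exact mem_grad_one.mp h
  -- weights
  have hLa : ∀ n : ℤ, φ (Lgen 0) (Lgen n) = ((φ (Lgen 0) (Lgen n)).1 n) • Lgen n := by
    intro n
    refine eigen_even (parL n) ?_
    have h := hd4 0 0 (Lgen 0) (Lgen n) (Lgen_mem 0) (Lgen_mem n)
    rw [sbk_LL, hL00, sbk_zero_left, zero_add, sbk_L0] at h
    rw [Int.cast_zero, sub_zero, zero_add, map_smul] at h
    exact h.symm
  obtain ⟨a, hLa⟩ : ∃ a : ℤ → ℂ, ∀ n, φ (Lgen 0) (Lgen n) = a n • Lgen n := ⟨_, hLa⟩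
  have hGc : ∀ n : ℤ, φ (Lgen 0) (Ggen n) = ((φ (Lgen 0) (Ggen n)).2 n) • Ggen n := by
    intro n
    refine eigen_odd (parG n) ?_
    have h := hd4 0 1 (Lgen 0) (Ggen n) (Lgen_mem 0) (Ggen_mem n)
    rw [sbk_LG, hL00, sbk_zero_left, zero_add, sbk_L0] at h
    rw [Int.cast_zero, zero_div, sub_zero, zero_add, map_smul] at h
    exact h.symm
  obtain ⟨c, hGc⟩ : ∃ c : ℤ → ℂ, ∀ n, φ (Lgen 0) (Ggen n) = c n • Ggen n := ⟨_, hGc⟩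
  have ha0 : a 0 = 0 := by
    have h := (hLa 0).symm.trans hL00
    exact Lgen_smul_inj (h.trans (zero_smul ℂ (Lgen 0)).symm)
  have hrel1 : ∀ k l : ℤ, a (k + l) = c k + c l := by
    intro k l
    have h := hd4 1 1 (Ggen k) (Ggen l) (Ggen_mem k) (Ggen_mem l)
    rw [sbk_GG, map_smul, hLa (k+l), hGc k, hGc l, sbk_smul_left, sbk_smul_right,
      sbk_GG] at h
    have e1 : (2 * a (k+l)) • Lgen (k+l) = (2:ℂ) • (a (k+l) • Lgen (k+l)) := by module
    have e2 : (2 * c k + 2 * c l) • Lgen (k+l)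
        = c k • ((2:ℂ) • Lgen (k+l)) + c l • ((2:ℂ) • Lgen (k+l)) := by module
    have h' : (2 * a (k+l)) • Lgen (k+l) = (2 * c k + 2 * c l) • Lgen (k+l) := by
      rw [e1, e2, h]
    have := Lgen_smul_inj h'
    linear_combination this / 2
  have hc0 : c 0 = 0 := by
    have h := hrel1 0 0
    rw [add_zero, ha0] at h
    linear_combination -h / 2
  have hac : ∀ n : ℤ, a n = c n := by
    intro n
    have h := hrel1 n 0
    rw [add_zero, hc0, add_zero] at h
    exact h
  have hrel2 : ∀ k : ℤ, c (1 + k) = c 1 + c k := by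
    intro k
    have h := hd4 0 1 (Lgen 1) (Ggen k) (Lgen_mem 1) (Ggen_mem k)
    rw [sbk_LG, map_smul, hGc (1+k), hLa 1, hGc k, sbk_smul_left, sbk_smul_right,
      sbk_LG, Int.cast_one] at h
    have e1 : (((k:ℂ) - 1/2) * c (1+k)) • Ggen (1+k)
        = ((k:ℂ) - 1/2) • (c (1+k) • Ggen (1+k)) := by module
    have e2 : ((a 1 + c k) * ((k:ℂ) - 1/2)) • Ggen (1+k)
        = a 1 • (((k:ℂ) - 1/2) • Ggen (1+k)) + c k • (((k:ℂ) - 1/2) • Ggen (1+k)) := by module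
    have h' : (((k:ℂ) - 1/2) * c (1+k)) • Ggen (1+k)
        = ((a 1 + c k) * ((k:ℂ) - 1/2)) • Ggen (1+k) := by rw [e1, e2, h]
    have heq := Ggen_smul_inj h'
    have hne : (k:ℂ) - 1/2 ≠ 0 := by
      intro hk
      have h2 : ((2*k : ℤ) : ℂ) = ((1:ℤ) : ℂ) := by push_cast; linear_combination 2*hk
      have := Int.cast_injective h2
      omega
    have h9 : ((k:ℂ) - 1/2) * (c (1+k) - (c 1 + c k)) = 0 := by
      rw [← hac 1]; linear_combination heq
    rcases mul_eq_zero.mp h9 with h0 | h0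
    · exact absurd h0 hne
    · exact sub_eq_zero.mp h0
  have hcn : ∀ n : ℤ, c n = (n : ℂ) * c 1 := by
    intro n
    induction n using Int.induction_on with
    | zero => rw [hc0, Int.cast_zero, zero_mul]
    | succ i ih =>
        have h := hrel2 i
        rw [show (1 + (i:ℤ)) = (i:ℤ) + 1 by ring] at h
        rw [h, ih]
        push_cast; ring
    | pred i ih =>
        have h := hrel2 (-(i:ℤ) - 1)
        rw [show (1 + (-(i:ℤ) - 1)) = -(i:ℤ) by ring] at h
        have h2 : c (-(i:ℤ) - 1) = c (-(i:ℤ)) - c 1 := by linear_combination -h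
        rw [h2, ih]
        push_cast; ring
  refine ⟨c 1, fun n => ?_, fun n => ?_⟩
  · rw [hLa n, hac n, hcn n]
  · rw [hGc n, hcn n]

lemma Lgen_fst_apply (m j : ℤ) : (Lgen m).1 j = if m = j then 1 else 0 := Finsupp.single_apply
lemma Lgen_snd (m : ℤ) : (Lgen m).2 = 0 := rfl
lemma Ggen_fst (k : ℤ) : (Ggen k).1 = 0 := rfl
lemma Ggen_snd_apply (k j : ℤ) : (Ggen k).2 j = if k = j then 1 else 0 := Finsupp.single_apply

lemma coefL {X Y : SVir0} (h : X = Y) (n : ℤ) : X.1 n = Y.1 n := congrArg (fun u => u.1 n) h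
lemma coefG {X Y : SVir0} (h : X = Y) (n : ℤ) : X.2 n = Y.2 n := congrArg (fun u => u.2 n) h

example (c : ℂ) (u v : SVir0) (j : ℤ) :
    ((c • (c • Ggen j) + c • v).2 j) = c * c + c * v.2 j := by
  simp only [Prod.smul_snd, Prod.snd_add, Finsupp.smul_apply, Finsupp.add_apply,
    Ggen_snd_apply, smul_eq_mul, eq_self_iff_true, if_true, mul_one]

lemma case_d1 (φ : SVir0 →ₗ[ℂ] SVir0 →ₗ[ℂ] SVir0) (hφ : IsSuperBiderivationSV 1 φ) :
    ∃ lam : ℂ,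
      (∀ n : ℤ, φ (Lgen 0) (Lgen n) = ((n : ℂ) * lam) • Lgen n) ∧
      (∀ n : ℤ, φ (Lgen 0) (Ggen n) = ((n : ℂ) * lam) • Ggen n) := by
  obtain ⟨hg, hsk, hb3, hb4⟩ := hφ
  have hL00 : φ (Lgen 0) (Lgen 0) = 0 := by
    have h := hsk 0 0 (Lgen 0) (Lgen 0) (Lgen_mem 0) (Lgen_mem 0)
    rw [show ((0 : ZMod 2) * 0).val = 0 by decide, pow_zero] at h
    have haa : φ (Lgen 0) (Lgen 0) + φ (Lgen 0) (Lgen 0) = 0 := by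
      nth_rewrite 1 [h]
      module
    have h2' : (2 : ℂ) • φ (Lgen 0) (Lgen 0) = 0 := (two_smul ℂ _).trans haa
    simpa using (smul_eq_zero.mp h2').resolve_left (by norm_num)
  -- derivation identity for x = L0, y even
  have hd4L : ∀ (γ : ZMod 2) (y z : SVir0), y ∈ grad 0 → z ∈ grad γ →
      φ (Lgen 0) (sbk y z) = sbk (φ (Lgen 0) y) z + sbk y (φ (Lgen 0) z) := by
    intro γ y z hy hz
    have h := hb4 0 0 γ (Lgen 0) y z (Lgen_mem 0) hy hz
    rw [show (((1:ZMod 2) + 0) * 0).val = 0 by decide, pow_zero, one_smul] at h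
    exact h
  -- derivation identity for x = G0 (all parities, since d + 1 = 0)
  have hd4G0 : ∀ (β γ : ZMod 2) (y z : SVir0), y ∈ grad β → z ∈ grad γ →
      φ (Ggen 0) (sbk y z) = sbk (φ (Ggen 0) y) z + sbk y (φ (Ggen 0) z) := by
    intro β γ y z hy hz
    have h := hb4 1 β γ (Ggen 0) y z (Ggen_mem 0) hy hz
    rw [show (((1:ZMod 2) + 1) * β) = 0 by rw [show ((1:ZMod 2)+1) = 0 by decide, zero_mul],
      show ((0:ZMod 2)).val = 0 from rfl, pow_zero, one_smul] at h
    exact h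
  -- parities
  have parL : ∀ n : ℤ, (φ (Lgen 0) (Lgen n)).1 = 0 := by
    intro n
    have h := hg 0 0 (Lgen 0) (Lgen n) (Lgen_mem 0) (Lgen_mem n)
    rw [show (0 + 0 + 1 : ZMod 2) = 1 by decide] at h
    exact mem_grad_one.mp h
  have parG : ∀ n : ℤ, (φ (Lgen 0) (Ggen n)).2 = 0 := by
    intro n
    have h := hg 0 1 (Lgen 0) (Ggen n) (Lgen_mem 0) (Ggen_mem n)
    rw [show (0 + 1 + 1 : ZMod 2) = 0 by decide] at h
    exact mem_grad_zero.mp h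
  -- weights for φ(L0,·)
  have hLb : ∀ n : ℤ, φ (Lgen 0) (Lgen n) = ((φ (Lgen 0) (Lgen n)).2 n) • Ggen n := by
    intro n
    refine eigen_odd (parL n) ?_
    have h := hd4L 0 (Lgen 0) (Lgen n) (Lgen_mem 0) (Lgen_mem n)
    rw [sbk_LL, hL00, sbk_zero_left, zero_add, sbk_L0] at h
    rw [Int.cast_zero, sub_zero, zero_add, map_smul] at h
    exact h.symm
  obtain ⟨b, hLb⟩ : ∃ b : ℤ → ℂ, ∀ n, φ (Lgen 0) (Lgen n) = b n • Ggen n := ⟨_, hLb⟩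
  have hGe : ∀ n : ℤ, φ (Lgen 0) (Ggen n) = ((φ (Lgen 0) (Ggen n)).1 n) • Lgen n := by
    intro n
    refine eigen_even (parG n) ?_
    have h := hd4L 1 (Lgen 0) (Ggen n) (Lgen_mem 0) (Ggen_mem n)
    rw [sbk_LG, hL00, sbk_zero_left, zero_add, sbk_L0] at h
    rw [Int.cast_zero, zero_div, sub_zero, zero_add, map_smul] at h
    exact h.symm
  obtain ⟨e, hGe⟩ : ∃ e : ℤ → ℂ, ∀ n, φ (Lgen 0) (Ggen n) = e n • Lgen n := ⟨_, hGe⟩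
  have hb0 : b 0 = 0 := by
    have h := (hLb 0).symm.trans hL00
    exact Ggen_smul_inj (h.trans (zero_smul ℂ (Ggen 0)).symm)
  -- skew symmetry applied to (G0, L0)
  have hskew := hsk 1 0 (Ggen 0) (Lgen 0) (Ggen_mem 0) (Lgen_mem 0)
  rw [show ((1 : ZMod 2) * 0).val = 0 by decide, pow_zero] at hskew
  have hGL0 : φ (Ggen 0) (Lgen 0) = (-(e 0)) • Lgen 0 := by
    rw [hskew, hGe 0]
    module
  -- parity of φ(G0, G k)
  have parGG : ∀ k : ℤ, (φ (Ggen 0) (Ggen k)).1 = 0 := by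
    intro k
    have h := hg 1 1 (Ggen 0) (Ggen k) (Ggen_mem 0) (Ggen_mem k)
    rw [show (1 + 1 + 1 : ZMod 2) = 1 by decide] at h
    exact mem_grad_one.mp h
  -- generalized weight equation for φ(G0, G k)
  have hwk : ∀ k : ℤ, e 0 * (k : ℂ) = 0 ∧
      φ (Ggen 0) (Ggen k) = ((φ (Ggen 0) (Ggen k)).2 k) • Ggen k := by
    intro k
    have h := hd4G0 0 1 (Lgen 0) (Ggen k) (Lgen_mem 0) (Ggen_mem k)
    rw [sbk_LG, Int.cast_zero, zero_div, sub_zero, zero_add, map_smul, hGL0,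
      sbk_smul_left, sbk_L0] at h
    rw [adL0_G, sbk_L0] at h
    have h3 : adL0 (φ (Ggen 0) (Ggen k)) = (k : ℂ) • φ (Ggen 0) (Ggen k) + (e 0 * k) • Ggen k := by
      rw [h]
      module
    exact eigen_odd' (parGG k) h3
  have he0 : e 0 = 0 := by
    have h := (hwk 1).1
    simpa using h
  have hGL00 : φ (Ggen 0) (Lgen 0) = 0 := by
    rw [hGL0, he0, neg_zero, zero_smul]
  obtain ⟨c, hc⟩ : ∃ c : ℤ → ℂ, ∀ k, φ (Ggen 0) (Ggen k) = c k • Ggen k :=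
    ⟨_, fun k => (hwk k).2⟩
  -- φ(G0, L n)
  have parGL : ∀ n : ℤ, (φ (Ggen 0) (Lgen n)).2 = 0 := by
    intro n
    have h := hg 1 0 (Ggen 0) (Lgen n) (Ggen_mem 0) (Lgen_mem n)
    rw [show (1 + 0 + 1 : ZMod 2) = 0 by decide] at h
    exact mem_grad_zero.mp h
  have hvn : ∀ n : ℤ, φ (Ggen 0) (Lgen n) = ((φ (Ggen 0) (Lgen n)).1 n) • Lgen n := by
    intro n
    refine eigen_even (parGL n) ?_
    have h := hd4G0 0 0 (Lgen 0) (Lgen n) (Lgen_mem 0) (Lgen_mem n)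
    rw [sbk_LL, Int.cast_zero, sub_zero, zero_add, map_smul, hGL00, sbk_zero_left,
      zero_add, sbk_L0] at h
    exact h.symm
  obtain ⟨p, hp⟩ : ∃ p : ℤ → ℂ, ∀ n, φ (Ggen 0) (Lgen n) = p n • Lgen n := ⟨_, hvn⟩
  have hp0 : p 0 = 0 := by
    have h := (hp 0).symm.trans hGL00
    exact Lgen_smul_inj (h.trans (zero_smul ℂ (Lgen 0)).symm)
  -- GG-relation for the even derivation φ(G0,·)
  have hrelA : ∀ k l : ℤ, p (k + l) = c k + c l := by
    intro k l
    have h := hd4G0 1 1 (Ggen k) (Ggen l) (Ggen_mem k) (Ggen_mem l)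
    rw [sbk_GG, map_smul, hp (k+l), hc k, hc l, sbk_smul_left, sbk_smul_right,
      sbk_GG] at h
    have e1 : (2 * p (k+l)) • Lgen (k+l) = (2:ℂ) • (p (k+l) • Lgen (k+l)) := by module
    have e2 : (2 * c k + 2 * c l) • Lgen (k+l)
        = c k • ((2:ℂ) • Lgen (k+l)) + c l • ((2:ℂ) • Lgen (k+l)) := by module
    have h' : (2 * p (k+l)) • Lgen (k+l) = (2 * c k + 2 * c l) • Lgen (k+l) := by
      rw [e1, e2, h]
    have := Lgen_smul_inj h'
    linear_combination this / 2
  have hc0 : c 0 = 0 := by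
    have h := hrelA 0 0
    rw [add_zero, hp0] at h
    linear_combination -h / 2
  have hpc : ∀ n : ℤ, p n = c n := by
    intro n
    have h := hrelA n 0
    rw [add_zero, hc0, add_zero] at h
    exact h
  have hrelB : ∀ k : ℤ, c (1 + k) = c 1 + c k := by
    intro k
    have h := hd4G0 0 1 (Lgen 1) (Ggen k) (Lgen_mem 1) (Ggen_mem k)
    rw [sbk_LG, map_smul, hc (1+k), hp 1, hc k, sbk_smul_left, sbk_smul_right,
      sbk_LG, Int.cast_one] at h
    have e1 : (((k:ℂ) - 1/2) * c (1+k)) • Ggen (1+k)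
        = ((k:ℂ) - 1/2) • (c (1+k) • Ggen (1+k)) := by module
    have e2 : ((p 1 + c k) * ((k:ℂ) - 1/2)) • Ggen (1+k)
        = p 1 • (((k:ℂ) - 1/2) • Ggen (1+k)) + c k • (((k:ℂ) - 1/2) • Ggen (1+k)) := by module
    have h' : (((k:ℂ) - 1/2) * c (1+k)) • Ggen (1+k)
        = ((p 1 + c k) * ((k:ℂ) - 1/2)) • Ggen (1+k) := by rw [e1, e2, h]
    have heq := Ggen_smul_inj h'
    have hne : (k:ℂ) - 1/2 ≠ 0 := by
      intro hk
      have h2 : ((2*k : ℤ) : ℂ) = ((1:ℤ) : ℂ) := by push_cast; linear_combination 2*hk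
      have := Int.cast_injective h2
      omega
    have h9 : ((k:ℂ) - 1/2) * (c (1+k) - (c 1 + c k)) = 0 := by
      rw [← hpc 1]; linear_combination heq
    rcases mul_eq_zero.mp h9 with h0 | h0
    · exact absurd h0 hne
    · exact sub_eq_zero.mp h0
  have hcn : ∀ n : ℤ, c n = (n : ℂ) * c 1 := by
    intro n
    induction n using Int.induction_on with
    | zero => rw [hc0, Int.cast_zero, zero_mul]
    | succ i ih =>
        have h := hrelB i
        rw [show (1 + (i:ℤ)) = (i:ℤ) + 1 by ring] at h
        rw [h, ih]
        push_cast; ring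
    | pred i ih =>
        have h := hrelB (-(i:ℤ) - 1)
        rw [show (1 + (-(i:ℤ) - 1)) = -(i:ℤ) by ring] at h
        have h2 : c (-(i:ℤ) - 1) = c (-(i:ℤ)) - c 1 := by linear_combination -h
        rw [h2, ih]
        push_cast; ring
  have hpn : ∀ n : ℤ, p n = (n : ℂ) * c 1 := fun n => (hpc n).trans (hcn n)
  -- compute b from the first biderivation identity with x = y = G0
  have hbn : ∀ n : ℤ, 2 * b n = -(n:ℂ) * p n := by
    intro n
    have h := hb3 1 1 0 (Ggen 0) (Ggen 0) (Lgen n) (Ggen_mem 0) (Ggen_mem 0) (Lgen_mem n)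
    rw [show ((1:ZMod 2) * 1).val = 1 by decide, pow_one,
      show ((1:ZMod 2) * 0).val = 0 by decide, pow_zero, one_smul] at h
    rw [sbk_GG, show ((0:ℤ) + 0) = 0 by norm_num, map_smul, LinearMap.smul_apply,
      hLb n, hp n, sbk_smul_right, sbk_smul_left, sbk_GL, sbk_LG,
      show (n + (0:ℤ)) = n from add_zero n] at h
    have hx := coefG h n
    simp only [Prod.smul_snd, Prod.snd_add, Finsupp.smul_apply, Finsupp.add_apply,
      Ggen_snd_apply, Lgen_snd, Finsupp.coe_zero, Pi.zero_apply, smul_eq_mul,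
      eq_self_iff_true, if_true, mul_one, mul_zero, add_zero, zero_add] at hx
    push_cast at hx
    linear_combination hx
  -- the parameter of the odd derivation vanishes
  have hmu : c 1 = 0 := by
    have h := hd4L 0 (Lgen 1) (Lgen 2) (Lgen_mem 1) (Lgen_mem 2)
    rw [sbk_LL, map_smul, hLb (1+2), hLb 1, hLb 2, sbk_smul_left, sbk_smul_right,
      sbk_GL, sbk_LG, show ((2:ℤ)+1) = 1+2 by norm_num] at h
    have hx := coefG h (1+2)
    simp only [Prod.smul_snd, Prod.snd_add, Finsupp.smul_apply, Finsupp.add_apply,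
      Ggen_snd_apply, Lgen_snd, Finsupp.coe_zero, Pi.zero_apply, smul_eq_mul,
      eq_self_iff_true, if_true, mul_one, mul_zero, add_zero, zero_add] at hx
    have e1 := hbn (1+2)
    have e2 := hbn 2
    rw [hpn] at e1 e2
    push_cast at hx e1 e2
    linear_combination (-2/3) * hx + (1/3) * e1 - (1/2) * e2
  have hbzero : ∀ n : ℤ, b n = 0 := by
    intro n
    have h := hbn n
    rw [hpn, hmu, mul_zero, mul_zero] at h
    linear_combination h / 2
  have hck : ∀ k : ℤ, c k = 0 := by
    intro k
    rw [hcn, hmu, mul_zero]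
  have hek : ∀ k : ℤ, e k = 0 := by
    intro k
    have h := hb3 1 1 1 (Ggen 0) (Ggen 0) (Ggen k) (Ggen_mem 0) (Ggen_mem 0) (Ggen_mem k)
    rw [show ((1:ZMod 2) * 1).val = 1 by decide, pow_one] at h
    rw [sbk_GG, show ((0:ℤ) + 0) = 0 by norm_num, map_smul, LinearMap.smul_apply,
      hGe k, hc k, sbk_smul_right, sbk_smul_left, sbk_GG, sbk_GG,
      show ((0:ℤ) + k) = k from zero_add k, show (k + (0:ℤ)) = k from add_zero k] at h
    have hx := coefL h k
    simp only [Prod.smul_fst, Prod.fst_add, Finsupp.smul_apply, Finsupp.add_apply,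
      Lgen_fst_apply, Ggen_fst, Finsupp.coe_zero, Pi.zero_apply, smul_eq_mul,
      eq_self_iff_true, if_true, mul_one, mul_zero, add_zero, zero_add] at hx
    have hck' := hck k
    linear_combination hx / 2 - 2 * hck'
  refine ⟨0, fun n => ?_, fun n => ?_⟩
  · rw [hLb n, hbzero n, zero_smul, mul_zero, zero_smul]
  · rw [hGe n, hek n, zero_smul, mul_zero, zero_smul]

/-- for every super-biderivation `φ` of homogeneous degree on the
centerless super-Virasoro algebra `S(0)` there is `λ ∈ ℂ` such that
`φ(L₀, z) = λ[L₀, z]` for all `z ∈ S(0)`; in particular `φ(L₀, L_n) = nλ L_n` and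
`φ(L₀, G_n) = nλ G_n` for all `n ∈ ℤ`. -/
theorem superBiderivation_SVir0_L0 (d : ZMod 2)
    (φ : SVir0 →ₗ[ℂ] SVir0 →ₗ[ℂ] SVir0) (hφ : IsSuperBiderivationSV d φ) :
    ∃ lam : ℂ,
      (∀ z : SVir0, φ (Lgen 0) z = lam • sbk (Lgen 0) z) ∧
      (∀ n : ℤ, φ (Lgen 0) (Lgen n) = ((n : ℂ) * lam) • Lgen n) ∧
      (∀ n : ℤ, φ (Lgen 0) (Ggen n) = ((n : ℂ) * lam) • Ggen n) := by
  have hd : d = 0 ∨ d = 1 := by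
    have h : ∀ x : ZMod 2, x = 0 ∨ x = 1 := by decide
    exact h d
  rcases hd with rfl | rfl
  · obtain ⟨lam, hL, hG⟩ := case_d0 φ hφ
    exact ⟨lam, conclude φ lam hL hG, hL, hG⟩
  · obtain ⟨lam, hL, hG⟩ := case_d1 φ hφ
    exact ⟨lam, conclude φ lam hL hG, hL, hG⟩
end

section
/- Every homogeneous linear super commuting map f on the centerless super-Virasoro algebra S(0) (i.e. every homogeneous linear map f : S(0) → S(0) with [f(x), x] = 0 for all x ∈ S(0)) has the form f(x) = λx for some λ ∈ ℂ and all x ∈ S(0). -/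
open Finsupp in
lemma eval_sum_single (v : ℤ →₀ ℂ) (g : ℤ → ℂ → ℂ) (hg : ∀ n, g n 0 = 0) (s u : ℤ) :
    (v.sum fun n a => Finsupp.single (n + s) (g n a)) u = g (u - s) (v (u - s)) := by
  classical
  rw [Finsupp.sum_apply]
  have h : ∀ n : ℤ, (n + s = u) ↔ (n = u - s) := fun n => by omega
  simp only [Finsupp.single_apply, h]
  rw [Finsupp.sum_ite_eq']
  split_ifs with hmem
  · rfl
  · rw [Finsupp.notMem_support_iff.mp hmem, hg]

open Finsupp in
lemma eval_sum_single' (v : ℤ →₀ ℂ) (g : ℤ → ℂ → ℂ) (hg : ∀ n, g n 0 = 0) (s u : ℤ) :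
    (v.sum fun n a => Finsupp.single (s + n) (g n a)) u = g (u - s) (v (u - s)) := by
  classical
  rw [Finsupp.sum_apply]
  have h : ∀ n : ℤ, (s + n = u) ↔ (n = u - s) := fun n => by omega
  simp only [Finsupp.single_apply, h]
  rw [Finsupp.sum_ite_eq']
  split_ifs with hmem
  · rfl
  · rw [Finsupp.notMem_support_iff.mp hmem, hg]

lemma sbk_single_fst (x : SVir0) (m k u : ℤ) (c d : ℂ) :
    (sbk x (Finsupp.single m c, Finsupp.single k d)).1 u
      = x.1 (u-m) * c * ((m:ℂ) - ((u-m:ℤ):ℂ)) + 2 * (x.2 (u-k) * d) := by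
  unfold sbk
  rw [Finsupp.add_apply]
  have h1 : (x.1.sum fun n a => (Finsupp.single m c).sum fun n' b =>
        Finsupp.single (n + n') (a * b * ((n':ℂ) - (n:ℂ))))
      = x.1.sum fun n a => Finsupp.single (n + m) (a * c * ((m:ℂ) - (n:ℂ))) :=
    Finsupp.sum_congr (fun n _ => Finsupp.sum_single_index (by simp))
  have h2 : (x.2.sum fun n a => (Finsupp.single k d).sum fun l b =>
        Finsupp.single (n + l) (2 * (a * b)))
      = x.2.sum fun n a => Finsupp.single (n + k) (2 * (a * d)) :=
    Finsupp.sum_congr (fun n _ => Finsupp.sum_single_index (by simp))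
  rw [h1, h2, eval_sum_single _ _ (by intro n; simp), eval_sum_single _ _ (by intro n; simp)]

lemma sbk_single_snd (x : SVir0) (m k u : ℤ) (c d : ℂ) :
    (sbk x (Finsupp.single m c, Finsupp.single k d)).2 u
      = x.1 (u-k) * d * ((k:ℂ) - ((u-k:ℤ):ℂ)/2) + -(x.2 (u-m) * c * (((u-m:ℤ):ℂ) - (m:ℂ)/2)) := by
  unfold sbk
  rw [Finsupp.add_apply]
  have h1 : (x.1.sum fun n a => (Finsupp.single k d).sum fun k' b =>
        Finsupp.single (n + k') (a * b * ((k':ℂ) - (n:ℂ)/2)))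
      = x.1.sum fun n a => Finsupp.single (n + k) (a * d * ((k:ℂ) - (n:ℂ)/2)) :=
    Finsupp.sum_congr (fun n _ => Finsupp.sum_single_index (by simp))
  have h2 : (x.2.sum fun n a => (Finsupp.single m c).sum fun m' b =>
        Finsupp.single (m' + n) (-(a * b * ((n:ℂ) - (m':ℂ)/2))))
      = x.2.sum fun n a => Finsupp.single (m + n) (-(a * c * ((n:ℂ) - (m:ℂ)/2))) :=
    Finsupp.sum_congr (fun n _ => Finsupp.sum_single_index (by simp))
  rw [h1, h2, eval_sum_single _ _ (by intro n; simp) k u,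
      eval_sum_single' _ _ (by intro n; simp) m u]

lemma half_ne (k t : ℤ) (h : 2*k ≠ t) : (k:ℂ) - (t:ℂ)/2 ≠ 0 := by
  intro h0
  apply h
  have : ((2*k:ℤ):ℂ) = (t:ℂ) := by push_cast; linear_combination 2*h0
  exact_mod_cast this

/-- every homogeneous linear super commuting map `f` on the centerless
super-Virasoro algebra `S(0)` (a linear map of homogeneous degree `e` with
`[f(x), x] = 0` for all `x`) has the form `f(x) = λx` for some `λ ∈ ℂ`. -/
theorem superCommutingMap_SVir0 (f : SVir0 →ₗ[ℂ] SVir0) (e : ZMod 2)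
    (hdeg : ∀ (α : ZMod 2) (x : SVir0), x ∈ grad α → f x ∈ grad (α + e))
    (hcomm : ∀ x : SVir0, sbk (f x) x = 0) :
    ∃ lam : ℂ, ∀ x : SVir0, f x = lam • x := by
  refine ⟨0, fun x => ?_⟩
  -- base equations from hcomm on L_m
  have hQfact : ∀ m t : ℤ, (f (Lgen m)).2 t * ((t:ℂ) - (m:ℂ)/2) = 0 := by
    intro m t
    have e0 : (sbk (f (Lgen m)) (Finsupp.single m 1, Finsupp.single 0 (0:ℂ))).2 (t + m) = 0 := by
      rw [show ((Finsupp.single m (1:ℂ), Finsupp.single 0 (0:ℂ)) : SVir0) = Lgen m by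
        simp [Lgen], hcomm (Lgen m)]
      simp
    rw [sbk_single_snd] at e0
    simp only [add_sub_cancel_right, sub_zero, mul_zero, zero_mul, mul_one] at e0
    linear_combination -e0
  have hS : ∀ k t : ℤ, (f (Ggen k)).2 t = 0 := by
    intro k t
    have e0 : (sbk (f (Ggen k)) (Finsupp.single 0 (0:ℂ), Finsupp.single k 1)).1 (t + k) = 0 := by
      rw [show ((Finsupp.single 0 (0:ℂ), Finsupp.single k (1:ℂ)) : SVir0) = Ggen k by
        simp [Ggen], hcomm (Ggen k)]
      simp
    rw [sbk_single_fst] at e0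
    simp only [add_sub_cancel_right, sub_zero, mul_zero, zero_mul, mul_one] at e0
    linear_combination e0/2
  have hRfact : ∀ k t : ℤ, (f (Ggen k)).1 t * ((k:ℂ) - (t:ℂ)/2) = 0 := by
    intro k t
    have e0 : (sbk (f (Ggen k)) (Finsupp.single 0 (0:ℂ), Finsupp.single k 1)).2 (t + k) = 0 := by
      rw [show ((Finsupp.single 0 (0:ℂ), Finsupp.single k (1:ℂ)) : SVir0) = Ggen k by
        simp [Ggen], hcomm (Ggen k)]
      simp
    rw [sbk_single_snd] at e0
    simp only [add_sub_cancel_right, sub_zero, mul_zero, zero_mul, mul_one] at e0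
    linear_combination e0
  -- cross equations
  have hcross : ∀ m k : ℤ,
      sbk (f (Lgen m) + f (Ggen k)) ((Finsupp.single m 1, Finsupp.single k 1) : SVir0) = 0 := by
    intro m k
    rw [← map_add, show (Lgen m + Ggen k : SVir0) = (Finsupp.single m 1, Finsupp.single k 1) by
      simp [Lgen, Ggen, Prod.ext_iff]]
    · exact hcomm _
  have Cfst : ∀ m k u : ℤ,
      ((f (Lgen m)).1 (u-m) + (f (Ggen k)).1 (u-m)) * 1 * ((m:ℂ) - ((u-m:ℤ):ℂ))
        + 2 * (((f (Lgen m)).2 (u-k) + (f (Ggen k)).2 (u-k)) * 1) = 0 := by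
    intro m k u
    have e0 : (sbk (f (Lgen m) + f (Ggen k)) ((Finsupp.single m 1, Finsupp.single k 1) : SVir0)).1 u = 0 := by
      rw [hcross m k]; simp
    rw [sbk_single_fst] at e0
    simpa only [Prod.fst_add, Prod.snd_add, Finsupp.add_apply] using e0
  have Csnd : ∀ m k u : ℤ,
      ((f (Lgen m)).1 (u-k) + (f (Ggen k)).1 (u-k)) * 1 * ((k:ℂ) - ((u-k:ℤ):ℂ)/2)
        + -(((f (Lgen m)).2 (u-m) + (f (Ggen k)).2 (u-m)) * 1 * (((u-m:ℤ):ℂ) - (m:ℂ)/2)) = 0 := by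
    intro m k u
    have e0 : (sbk (f (Lgen m) + f (Ggen k)) ((Finsupp.single m 1, Finsupp.single k 1) : SVir0)).2 u = 0 := by
      rw [hcross m k]; simp
    rw [sbk_single_snd] at e0
    simpa only [Prod.fst_add, Prod.snd_add, Finsupp.add_apply] using e0
  -- step 1: P = 0
  have hP : ∀ m t : ℤ, (f (Lgen m)).1 t = 0 := by
    intro m t
    obtain ⟨k, hk⟩ : ∃ k : ℤ, 2*k ≠ t := by
      rcases eq_or_ne t 0 with rfl | h
      · exact ⟨1, by omega⟩
      · exact ⟨t, by omega⟩
    have hne := half_ne k t hk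
    have hRk : (f (Ggen k)).1 t = 0 := (mul_eq_zero.mp (hRfact k t)).resolve_right hne
    have e0 := Csnd m k (t + k)
    simp only [add_sub_cancel_right] at e0
    have h3 : (f (Lgen m)).1 t * ((k:ℂ) - (t:ℂ)/2) = 0 := by
      linear_combination e0 + hQfact m (t + k - m)
        + (((t + k - m : ℤ) : ℂ) - (m:ℂ)/2) * hS k (t + k - m) + ((t:ℂ)/2 - (k:ℂ)) * hRk
    exact (mul_eq_zero.mp h3).resolve_right hne
  -- step 2: Q = 0
  have hQ : ∀ m t : ℤ, (f (Lgen m)).2 t = 0 := by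
    intro m t
    have e0 := Cfst m (t - m + 1) (t + (t - m + 1))
    simp only [add_sub_cancel_right] at e0
    have hRk : (f (Ggen (t - m + 1))).1 (t + (t - m + 1) - m) = 0 := by
      refine (mul_eq_zero.mp (hRfact _ _)).resolve_right (half_ne _ _ (by omega))
    rw [hP, hRk, hS] at e0
    linear_combination e0/2
  -- step 3: R = 0
  have hR : ∀ k t : ℤ, (f (Ggen k)).1 t = 0 := by
    intro k t
    have e0 := Cfst (t + 1) k (t + (t + 1))
    simp only [add_sub_cancel_right] at e0
    rw [hP, hQ, hS] at e0
    push_cast at e0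
    linear_combination e0
  -- generators go to zero
  have hL0 : ∀ m, f (Lgen m) = 0 := by
    intro m
    rw [Prod.ext_iff]
    constructor <;> ext t <;> simp [hP, hQ]
  have hG0 : ∀ k, f (Ggen k) = 0 := by
    intro k
    rw [Prod.ext_iff]
    constructor <;> ext t <;> simp [hR, hS]
  -- conclude f = 0
  have e1 : f.comp (LinearMap.inl ℂ (ℤ→₀ℂ) (ℤ→₀ℂ)) = 0 := by
    apply Finsupp.lhom_ext
    intro a b
    have hsingle : (b • Lgen a : SVir0) = ((Finsupp.single a b, 0) : SVir0) := by
      rw [Lgen, Prod.smul_mk, Finsupp.smul_single', mul_one, smul_zero]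
    simp only [LinearMap.comp_apply, LinearMap.inl_apply, LinearMap.zero_apply]
    rw [← hsingle, map_smul, hL0, smul_zero]
  have e2 : f.comp (LinearMap.inr ℂ (ℤ→₀ℂ) (ℤ→₀ℂ)) = 0 := by
    apply Finsupp.lhom_ext
    intro a b
    have hsingle : (b • Ggen a : SVir0) = (((0 : ℤ→₀ℂ), Finsupp.single a b) : SVir0) := by
      rw [Ggen, Prod.smul_mk, Finsupp.smul_single', mul_one, smul_zero]
    simp only [LinearMap.comp_apply, LinearMap.inr_apply, LinearMap.zero_apply]
    rw [← hsingle, map_smul, hG0, smul_zero]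
  have hx : x = ((x.1, 0) : SVir0) + ((0, x.2) : SVir0) := by
    simp [Prod.ext_iff]
  rw [zero_smul, hx, map_add]
  have h1 : f ((x.1, 0) : SVir0) = 0 := by
    have := congrArg (fun g => g x.1) e1
    simpa using this
  have h2 : f (((0:ℤ→₀ℂ), x.2) : SVir0) = 0 := by
    have := congrArg (fun g => g x.2) e2
    simpa using this
  rw [h1, h2, add_zero]
end
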